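/- arXiv:2509.20532 — 3 statements merged into one kernel-verified Lean document; each statement's English description precedes it below -/
import Mathlib

section
/- Suppose G is a finitely generated group, 𝒫 = {P_1,…,P_n} ↪_h (G,X), and X generates G. Let δ be a hyperbolicity constant such that for all r ∈ ℕ ∪ {0} the coned-off cusped Cayley graph 𝔾_r = 𝕂_r(G,X,⋃_i X_i,𝒫) is δ-hyperbolic. Then for any L > δ and any r, every coned-off L-horoball is convex in 𝔾_r: any geodesic between two points of a coned-off L-horoball is entirely contained in it. -/
set_option autoImplicit false
set_option maxHeartbeats 1000000

noncomputable section

namespace GpQc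

universe u

open SimpleGraph

/-! ### Basic metric notions on graphs -/

variable {V W : Type*}

/-- The graph metric, as a real number. -/
def gdist (Γ : SimpleGraph V) (a b : V) : ℝ := (Γ.dist a b : ℝ)

/-- A walk is a geodesic if no walk with the same endpoints is shorter. -/
def IsGeodesic (Γ : SimpleGraph V) {x y : V} (p : Γ.Walk x y) : Prop :=
  ∀ q : Γ.Walk x y, p.length ≤ q.length

/-- All geodesic triangles of `Γ` are `δ`-slim. -/
def SlimTriangles (Γ : SimpleGraph V) (δ : ℝ) : Prop :=
  ∀ (x y z : V) (p : Γ.Walk x y) (q : Γ.Walk y z) (s : Γ.Walk x z),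
    IsGeodesic Γ p → IsGeodesic Γ q → IsGeodesic Γ s →
      ∀ v ∈ p.support, ∃ w, (w ∈ q.support ∨ w ∈ s.support) ∧ gdist Γ v w ≤ δ

/-- Gromov hyperbolicity of a graph. -/
def GromovHyperbolic (Γ : SimpleGraph V) : Prop :=
  ∃ δ : ℝ, 0 ≤ δ ∧ SlimTriangles Γ δ

/-- The angle at `v` between `x` and `y`: the combinatorial length of a shortest
path from `x` to `y` avoiding `v` (`⊤` if there is none). -/
def angle (Γ : SimpleGraph V) (v x y : V) : ℕ∞ :=
  sInf {n : ℕ∞ | ∃ p : Γ.Walk x y, v ∉ p.support ∧ (p.length : ℕ∞) = n}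

/-- The angle at `v` between two walks issuing from `v`. -/
def pathAngle (Γ : SimpleGraph V) {v y z : V} (p : Γ.Walk v y) (q : Γ.Walk v z) : ℕ∞ :=
  angle Γ v (p.getVert 1) (q.getVert 1)

/-- `Γ` is fine at `v`: balls of the angle metric on the neighbours of `v` are finite. -/
def FineAt (Γ : SimpleGraph V) (v : V) : Prop :=
  ∀ x : V, Γ.Adj v x → ∀ n : ℕ, {y : V | Γ.Adj v y ∧ angle Γ v x y ≤ (n : ℕ∞)}.Finite

/-- An extended natural number is greater than a real number (true at `⊤`). -/
def egt (a : ℕ∞) (r : ℝ) : Prop := ∀ n : ℕ, a = (n : ℕ∞) → r < n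

/-- `(k,l)`-quasi-isometric embedding with respect to given distance functions. -/
def IsQIEmbD {α β : Type*} (dα : α → α → ℝ) (dβ : β → β → ℝ) (f : α → β) (k l : ℝ) : Prop :=
  ∀ a b : α, (1 / k) * dα a b - l ≤ dβ (f a) (f b) ∧ dβ (f a) (f b) ≤ k * dα a b + l

/-- `(k,l)`-quasi-isometric embedding between graphs. -/
def IsQIEmb (Γ : SimpleGraph V) (Δ : SimpleGraph W) (f : V → W) (k l : ℝ) : Prop :=
  IsQIEmbD (gdist Γ) (gdist Δ) f k l

/-- Quasi-isometry between graphs, with image `c`-dense. -/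
def IsQI (Γ : SimpleGraph V) (Δ : SimpleGraph W) (f : V → W) (k l c : ℝ) : Prop :=
  IsQIEmb Γ Δ f k l ∧ ∀ w : W, ∃ a : V, gdist Δ (f a) w ≤ c

/-- A walk is a `(k,l)`-quasi-geodesic: every subpath has length at most
`k` times the distance between its endpoints plus `l`. -/
def IsQuasiGeodesic (Γ : SimpleGraph V) {x y : V} (p : Γ.Walk x y) (k l : ℝ) : Prop :=
  ∀ i j : ℕ, i ≤ j → j ≤ p.length →
    ((j : ℝ) - (i : ℝ)) ≤ k * gdist Γ (p.getVert i) (p.getVert j) + l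

/-- A set of vertices is `lam`-quasiconvex: every geodesic between two of its points
stays in its `lam`-neighbourhood. -/
def QuasiconvexSet (Γ : SimpleGraph V) (S : Set V) (lam : ℝ) : Prop :=
  ∀ x ∈ S, ∀ y ∈ S, ∀ p : Γ.Walk x y, IsGeodesic Γ p →
    ∀ v ∈ p.support, ∃ s ∈ S, gdist Γ v s ≤ lam

/-- The supports of two walks are at Hausdorff distance at most `c`. -/
def SupClose {α : Type*} (Γ : SimpleGraph α) {x y x' y' : α}
    (p : Γ.Walk x y) (q : Γ.Walk x' y') (c : ℝ) : Prop :=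
  (∀ u ∈ p.support, ∃ v ∈ q.support, gdist Γ u v ≤ c) ∧
  (∀ v ∈ q.support, ∃ u ∈ p.support, gdist Γ u v ≤ c)

/-- Every step of the walk satisfies the binary predicate `Q`. -/
def WalkAll {α : Type*} {Γ : SimpleGraph α} {x y : α} (p : Γ.Walk x y)
    (Q : α → α → Prop) : Prop :=
  ∀ d ∈ p.darts, Q d.toProd.1 d.toProd.2

/-! ### Graphs with a group action -/

variable {G : Type u} [Group G]

/-- A graph together with an action of `G` by graph automorphisms. -/
structure GGraph (G : Type u) [Group G] : Type (u + 1) where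
  V : Type u
  graph : SimpleGraph V
  smul : G → V → V
  one_smul' : ∀ v, smul 1 v = v
  mul_smul' : ∀ g h v, smul (g * h) v = smul g (smul h v)
  adj_smul' : ∀ g a b, graph.Adj a b → graph.Adj (smul g a) (smul g b)

/-- The `G`-stabilizer of a vertex. -/
def GGraph.stab (A : GGraph G) (v : A.V) : Subgroup G where
  carrier := {g | A.smul g v = v}
  one_mem' := A.one_smul' v
  mul_mem' := by
    intro a b ha hb
    simp only [Set.mem_setOf_eq] at *
    rw [A.mul_smul', hb, ha]
  inv_mem' := by
    intro g hg
    simp only [Set.mem_setOf_eq] at *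
    calc A.smul g⁻¹ v = A.smul g⁻¹ (A.smul g v) := by rw [hg]
    _ = A.smul (g⁻¹ * g) v := (A.mul_smul' _ _ _).symm
    _ = v := by rw [inv_mul_cancel, A.one_smul']

/-- Vertices up to the `G`-action. -/
def GGraph.orbitSetoid (A : GGraph G) : Setoid A.V where
  r v w := ∃ g : G, A.smul g v = w
  iseqv := by
    constructor
    · exact fun v => ⟨1, A.one_smul' v⟩
    · rintro v w ⟨g, rfl⟩
      exact ⟨g⁻¹, by rw [← A.mul_smul', inv_mul_cancel, A.one_smul']⟩
    · rintro u v w ⟨g, rfl⟩ ⟨h, rfl⟩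
      exact ⟨h * g, A.mul_smul' _ _ _⟩

/-- The (setwise) stabilizer of an edge. -/
def GGraph.edgeStab (A : GGraph G) (a b : A.V) : Set G :=
  {g | (A.smul g a = a ∧ A.smul g b = b) ∨ (A.smul g a = b ∧ A.smul g b = a)}

/-- Vertices of an invariant set up to the action of a subgroup `H`. -/
def GGraph.suborbitSetoid (A : GGraph G) (H : Subgroup G) (S : Set A.V) : Setoid S where
  r v w := ∃ h ∈ H, A.smul h (v : A.V) = (w : A.V)
  iseqv := by
    constructor
    · exact fun v => ⟨1, H.one_mem, A.one_smul' v⟩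
    · rintro v w ⟨h, hH, hvw⟩
      refine ⟨h⁻¹, H.inv_mem hH, ?_⟩
      rw [← hvw, ← A.mul_smul', inv_mul_cancel, A.one_smul']
    · rintro u v w ⟨h, hH, huv⟩ ⟨h', hH', hvw⟩
      exact ⟨h' * h, H.mul_mem hH' hH, by rw [A.mul_smul', huv, hvw]⟩

/-- The conjugate subgroup `g P g⁻¹`. -/
def conjSubgroup (g : G) (P : Subgroup G) : Subgroup G :=
  P.map (MulAut.conj g).toMonoidHom

variable {ι : Type u}

/-- `A` is a `(G,𝒫)`-graph. -/
def IsGPGraph (P : ι → Subgroup G) (A : GGraph G) : Prop :=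
  A.graph.Connected ∧
  GromovHyperbolic A.graph ∧
  Finite (Quotient A.orbitSetoid) ∧
  (∀ v : A.V, (A.stab v : Set G).Finite ∨ ∃ (i : ι) (g : G), A.stab v = conjSubgroup g (P i)) ∧
  (∀ i : ι, ∃ v : A.V, A.stab v = P i) ∧
  (∀ a b : A.V, A.graph.Adj a b → (A.edgeStab a b).Finite) ∧
  (∀ v : A.V, ¬ (A.stab v : Set G).Finite → FineAt A.graph v)

/-- A `(G,𝒫)`-graph is thick. -/
def IsThick (P : ι → Subgroup G) (A : GGraph G) : Prop :=
  ∃ (u₀ : A.V) (v : ι → A.V),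
    A.stab u₀ = ⊥ ∧
    (∀ i, A.graph.Adj u₀ (v i) ∧ A.stab (v i) = P i) ∧
    (∃ S : Set G, S.Finite ∧ Subgroup.closure (S ∪ ⋃ i, (P i : Set G)) = ⊤ ∧
      ∀ s ∈ S, A.graph.Adj u₀ (A.smul s u₀)) ∧
    (∃ (m : ℕ) (u : Fin m → A.V),
      (∀ j, A.graph.Adj u₀ (u j)) ∧ (∀ j, (A.stab (u j) : Set G).Finite) ∧
      ∀ w : A.V, (A.stab w : Set G).Finite →
        ∃ g : G, A.smul g u₀ = w ∨ ∃ j, A.smul g (u j) = w)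

/-- `H` is a `(G,𝒫)`-quasiconvex subgroup of `G`. -/
def IsGPQuasiconvex (P : ι → Subgroup G) (H : Subgroup G) : Prop :=
  ∃ A : GGraph G, IsGPGraph P A ∧ ∃ L : A.graph.Subgraph,
    L.verts.Nonempty ∧ L.Connected ∧
    (∀ h ∈ H, ∀ v ∈ L.verts, A.smul h v ∈ L.verts) ∧
    (∀ h ∈ H, ∀ a b : A.V, L.Adj a b → L.Adj (A.smul h a) (A.smul h b)) ∧
    (∃ k l : ℝ, 0 < k ∧ IsQIEmb L.coe A.graph (fun x => (x : A.V)) k l) ∧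
    Finite (Quotient (A.suborbitSetoid H L.verts))

/-- `H` is a full `(G,𝒫)`-quasiconvex subgroup. -/
def IsFullGPQuasiconvex (P : ι → Subgroup G) (H : Subgroup G) : Prop :=
  IsGPQuasiconvex P H ∧
  ∀ (g : G) (i : ι), ¬ ((H ⊓ conjSubgroup g (P i) : Subgroup G) : Set G).Finite →
    H.relIndex (conjSubgroup g (P i)) ≠ 0

/-! ### Coned-off Cayley graphs and hyperbolically embedded collections -/

/-- The apices of the coned-off Cayley graph: left cosets of members of the family. -/
abbrev Coset (P : ι → Subgroup G) : Type u := Σ i : ι, G ⧸ P i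

/-- Vertices of the coned-off Cayley graph. -/
abbrev ConedV (G : Type u) [Group G] {ι : Type u} (P : ι → Subgroup G) : Type u :=
  G ⊕ Coset P

/-- Basic edge relation for the coned-off Cayley graph. -/
def conedRel (P : ι → Subgroup G) (X : Set G) : ConedV G P → ConedV G P → Prop
  | Sum.inl g, Sum.inl h => ∃ x ∈ X, h = g * x
  | Sum.inl g, Sum.inr p => p.2 = QuotientGroup.mk g
  | Sum.inr _, _ => False

/-- The coned-off Cayley graph `Γ̂(G,𝒫,X)`. -/
def conedCayley (G : Type u) [Group G] {ι : Type u} (P : ι → Subgroup G) (X : Set G) :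
    SimpleGraph (ConedV G P) :=
  SimpleGraph.fromRel (conedRel P X)

/-- The family `P` is hyperbolically embedded in `G` with respect to `X`:
the coned-off Cayley graph is connected, hyperbolic and fine at every apex. -/
def HypEmb (P : ι → Subgroup G) (X : Set G) : Prop :=
  (conedCayley G P X).Connected ∧ GromovHyperbolic (conedCayley G P X) ∧
    ∀ c : Coset P, FineAt (conedCayley G P X) (Sum.inr c)

/-- The natural `G`-action on the vertices of the coned-off Cayley graph. -/
def conedSmul (P : ι → Subgroup G) (g : G) : ConedV G P → ConedV G P
  | Sum.inl h => Sum.inl (g * h)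
  | Sum.inr c => Sum.inr ⟨c.1, g • c.2⟩

lemma conedSmul_leftInverse (P : ι → Subgroup G) (g : G) :
    Function.LeftInverse (conedSmul P g⁻¹) (conedSmul P g) := by
  rintro (h | c)
  · simp [conedSmul, mul_assoc]
  · simp [conedSmul]

lemma conedRel_smul (P : ι → Subgroup G) (X : Set G) (g : G) {a b : ConedV G P}
    (h : conedRel P X a b) : conedRel P X (conedSmul P g a) (conedSmul P g b) := by
  match a, b with
  | Sum.inl x, Sum.inl y =>
      obtain ⟨s, hs, rfl⟩ := h
      exact ⟨s, hs, (mul_assoc g x s).symm⟩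
  | Sum.inl x, Sum.inr c =>
      simp only [conedRel] at h ⊢
      simp [conedSmul, h]
  | Sum.inr c, _ => exact h.elim

/-- The coned-off Cayley graph as a `G`-graph. -/
def conedGGraph (P : ι → Subgroup G) (X : Set G) : GGraph G where
  V := ConedV G P
  graph := conedCayley G P X
  smul g v := conedSmul P g v
  one_smul' := by rintro (h | c) <;> simp [conedSmul]
  mul_smul' := by rintro g g' (h | c) <;> simp [conedSmul, mul_assoc, mul_smul]
  adj_smul' := by
    rintro g a b hab
    unfold conedCayley at hab ⊢
    rw [SimpleGraph.fromRel_adj] at hab ⊢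
    obtain ⟨hne, h⟩ := hab
    refine ⟨fun he => hne ((conedSmul_leftInverse P g).injective he), ?_⟩
    rcases h with h | h
    · exact Or.inl (conedRel_smul P X g h)
    · exact Or.inr (conedRel_smul P X g h)

/-! ### Word length, horoballs, cusped Cayley graphs -/

/-- Word length of `g` over the (symmetrized) alphabet `S`. -/
def wlen (S : Set G) (g : G) : ℕ∞ :=
  sInf {n : ℕ∞ | ∃ L : List G, (∀ x ∈ L, x ∈ S ∨ x⁻¹ ∈ S) ∧ L.prod = g ∧ (L.length : ℕ∞) = n}

/-- Basic edge relation of the combinatorial horoball over a graph. -/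
def horoRel (Γ : SimpleGraph V) : V × ℕ → V × ℕ → Prop := fun a b =>
  (a.1 = b.1 ∧ b.2 = a.2 + 1) ∨
  (a.2 = b.2 ∧ a.1 ≠ b.1 ∧ Γ.Reachable a.1 b.1 ∧ Γ.dist a.1 b.1 ≤ 2 ^ a.2)

/-- The combinatorial horoball `ℋ(Γ)`. -/
def horoball (Γ : SimpleGraph V) : SimpleGraph (V × ℕ) :=
  SimpleGraph.fromRel (horoRel Γ)

/-- Basic edge relation of the coned-off horoball `ℋ_r(Γ)`; `none` is the apex. -/
def conedHoroRel (Γ : SimpleGraph V) (r : ℕ) :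
    Option (V × ℕ) → Option (V × ℕ) → Prop
  | some a, some b => horoRel Γ a b
  | some a, none => r ≤ a.2
  | none, _ => False

/-- The coned-off combinatorial horoball `ℋ_r(Γ)`. -/
def conedHoroball (Γ : SimpleGraph V) (r : ℕ) : SimpleGraph (Option (V × ℕ)) :=
  SimpleGraph.fromRel (conedHoroRel Γ r)

/-- A pair of vertices of a coned-off horoball spanning a vertical edge. -/
def IsVertPair : Option (V × ℕ) → Option (V × ℕ) → Prop
  | some a, some b => a.1 = b.1 ∧ (b.2 = a.2 + 1 ∨ a.2 = b.2 + 1)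
  | _, _ => False

/-- A pair of vertices of a coned-off horoball spanning a horizontal edge. -/
def IsHorizPair : Option (V × ℕ) → Option (V × ℕ) → Prop
  | some a, some b => a.2 = b.2 ∧ a.1 ≠ b.1
  | _, _ => False

/-- A pair of vertices spanning a cone edge (one of them is the apex). -/
def IsConePair : Option (V × ℕ) → Option (V × ℕ) → Prop := fun a b =>
  a = none ∨ b = none

/-- Vertical pairs in the plain horoball. -/
def IsVertPair' : V × ℕ → V × ℕ → Prop := fun a b =>
  a.1 = b.1 ∧ (b.2 = a.2 + 1 ∨ a.2 = b.2 + 1)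

/-- Horizontal pairs in the plain horoball. -/
def IsHorizPair' : V × ℕ → V × ℕ → Prop := fun a b =>
  a.2 = b.2 ∧ a.1 ≠ b.1

/-- The Groves–Manning shape of geodesics in a coned-off horoball: at most two
vertical segments together with either a single horizontal segment of length at
most `3` or at most two cone edges. -/
def GMShape {Γ : SimpleGraph V} {r : ℕ} {x y : Option (V × ℕ)}
    (p : (conedHoroball Γ r).Walk x y) : Prop :=
  ∃ (a b : Option (V × ℕ)) (p₁ : (conedHoroball Γ r).Walk x a)
    (p₂ : (conedHoroball Γ r).Walk a b) (p₃ : (conedHoroball Γ r).Walk b y),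
    p = (p₁.append p₂).append p₃ ∧
    WalkAll p₁ IsVertPair ∧ WalkAll p₃ IsVertPair ∧
    ((WalkAll p₂ IsHorizPair ∧ p₂.length ≤ 3) ∨ (WalkAll p₂ IsConePair ∧ p₂.length ≤ 2))

/-- Vertices of the coned-off cusped Cayley graph `𝕂_r(G,X,⋃ᵢXᵢ,𝒫)`:
group elements (depth 0), horoball vertices of positive depth, and apices. -/
abbrev CuspV (G : Type u) [Group G] {ι : Type u} (P : ι → Subgroup G) : Type u :=
  G ⊕ ((Σ _i : ι, G × ℕ+) ⊕ Coset P)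

/-- Basic edge relation of the coned-off cusped Cayley graph. -/
def cuspRel (P : ι → Subgroup G) (X : Set G) (Xi : ι → Set G) (r : ℕ) :
    CuspV G P → CuspV G P → Prop
  | Sum.inl g, Sum.inl h => (∃ x ∈ X, h = g * x) ∨ ∃ i, ∃ x ∈ Xi i, h = g * x
  | Sum.inl g, Sum.inr (Sum.inl d) => d.2.1 = g ∧ d.2.2 = 1
  | Sum.inl g, Sum.inr (Sum.inr c) => r = 0 ∧ c.2 = QuotientGroup.mk g
  | Sum.inr (Sum.inl d), Sum.inr (Sum.inl e) =>
      d.1 = e.1 ∧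
      ((d.2.1 = e.2.1 ∧ (e.2.2 : ℕ) = (d.2.2 : ℕ) + 1) ∨
       (d.2.2 = e.2.2 ∧ d.2.1 ≠ e.2.1 ∧ d.2.1⁻¹ * e.2.1 ∈ P e.1 ∧
         wlen (Xi e.1) (d.2.1⁻¹ * e.2.1) ≤ ((2 ^ (d.2.2 : ℕ) : ℕ) : ℕ∞)))
  | Sum.inr (Sum.inl d), Sum.inr (Sum.inr c) =>
      d.1 = c.1 ∧ r ≤ (d.2.2 : ℕ) ∧ c.2 = QuotientGroup.mk d.2.1
  | Sum.inr _, Sum.inl _ => False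
  | Sum.inr (Sum.inr _), Sum.inr _ => False

/-- The coned-off cusped Cayley graph `𝕂_r(G,X,⋃ᵢXᵢ,𝒫)`. -/
def cusped (G : Type u) [Group G] {ι : Type u} (P : ι → Subgroup G)
    (X : Set G) (Xi : ι → Set G) (r : ℕ) : SimpleGraph (CuspV G P) :=
  SimpleGraph.fromRel (cuspRel P X Xi r)

/-- The depth of a vertex of `𝕂_r`; the apices are declared to have depth `r+1`. -/
def cuspDepth {P : ι → Subgroup G} (r : ℕ) : CuspV G P → ℕ
  | Sum.inl _ => 0
  | Sum.inr (Sum.inl d) => (d.2.2 : ℕ)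
  | Sum.inr (Sum.inr _) => r + 1

/-- Membership of a vertex of `𝕂_r` in the (closed) horoball over the coset `c`. -/
def inHoro (P : ι → Subgroup G) (c : Coset P) : CuspV G P → Prop
  | Sum.inl g => c.2 = QuotientGroup.mk g
  | Sum.inr (Sum.inl d) => (⟨d.1, QuotientGroup.mk d.2.1⟩ : Coset P) = c
  | Sum.inr (Sum.inr c') => c' = c

/-- The coned-off `L`-horoball: the apex together with all vertices of the
horoball over `c` of depth at least `L`. -/
def LHoroball (P : ι → Subgroup G) (r : ℕ) (c : Coset P) (L : ℕ) : Set (CuspV G P) :=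
  {v | inHoro P c v ∧ L ≤ cuspDepth r v}

/-! ### The maps `π_q^r` and `ι_q^r` -/

/-- Points of the geometric realization of the coned-off Cayley graph used as targets
of `π_q^r`: vertices, together with interior points of cone edges. The interior point
`⟨i, g, t⟩` lies on the cone edge from `g` to the apex `gPᵢ`, at distance `t` from `g`. -/
abbrev ConePt (G : Type u) [Group G] {ι : Type u} (P : ι → Subgroup G) : Type u :=
  ConedV G P ⊕ (Σ _i : ι, G × {t : ℝ // 0 < t ∧ t < 1})

/-- The path metric on `ConePt`. -/
def conePtDist (P : ι → Subgroup G) (X : Set G) : ConePt G P → ConePt G P → ℝ :=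
  fun A B =>
    match A, B with
    | Sum.inl a, Sum.inl b => gdist (conedCayley G P X) a b
    | Sum.inl a, Sum.inr e =>
        min (gdist (conedCayley G P X) a (Sum.inl e.2.1) + (e.2.2 : ℝ))
            (gdist (conedCayley G P X) a (Sum.inr ⟨e.1, QuotientGroup.mk e.2.1⟩) +
              (1 - (e.2.2 : ℝ)))
    | Sum.inr e, Sum.inl b =>
        min ((e.2.2 : ℝ) + gdist (conedCayley G P X) (Sum.inl e.2.1) b)
            ((1 - (e.2.2 : ℝ)) +
              gdist (conedCayley G P X) (Sum.inr ⟨e.1, QuotientGroup.mk e.2.1⟩) b)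
    | Sum.inr e, Sum.inr f =>
        @ite _ ((⟨e.1, e.2.1⟩ : Σ _i : ι, G) = ⟨f.1, f.2.1⟩) (Classical.dec _)
          (min (baseDist P X e f) |(e.2.2 : ℝ) - (f.2.2 : ℝ)|)
          (baseDist P X e f)
where baseDist (P : ι → Subgroup G) (X : Set G)
    (e f : Σ _i : ι, G × {t : ℝ // 0 < t ∧ t < 1}) : ℝ :=
    min (min ((e.2.2 : ℝ) + gdist (conedCayley G P X) (Sum.inl e.2.1) (Sum.inl f.2.1) + (f.2.2 : ℝ))
             ((e.2.2 : ℝ) + gdist (conedCayley G P X) (Sum.inl e.2.1)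
                (Sum.inr ⟨f.1, QuotientGroup.mk f.2.1⟩) + (1 - (f.2.2 : ℝ))))
        (min ((1 - (e.2.2 : ℝ)) + gdist (conedCayley G P X)
                (Sum.inr ⟨e.1, QuotientGroup.mk e.2.1⟩) (Sum.inl f.2.1) + (f.2.2 : ℝ))
             ((1 - (e.2.2 : ℝ)) + gdist (conedCayley G P X)
                (Sum.inr ⟨e.1, QuotientGroup.mk e.2.1⟩)
                (Sum.inr ⟨f.1, QuotientGroup.mk f.2.1⟩) + (1 - (f.2.2 : ℝ))))

/-- The map `π_q^r` from the vertices of `𝕂_r` to the realization of the coned-off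
Cayley graph: depth-0 vertices and apices go to the corresponding vertices; a vertex of
depth `d ≥ q` in a horoball goes to the corresponding apex; a vertex of depth
`0 < d < q` over the coset element `g` goes to the point of the cone edge of `g` at
distance `d/q` from `g`. -/
def piMap (P : ι → Subgroup G) (q : ℕ) (hq : 0 < q) : CuspV G P → ConePt G P
  | Sum.inl g => Sum.inl (Sum.inl g)
  | Sum.inr (Sum.inr c) => Sum.inl (Sum.inr c)
  | Sum.inr (Sum.inl d) =>
      if h : q ≤ (d.2.2 : ℕ) then Sum.inl (Sum.inr ⟨d.1, QuotientGroup.mk d.2.1⟩)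
      else
        Sum.inr ⟨d.1, (d.2.1,
          ⟨(((d.2.2 : ℕ) : ℝ)) / ((q : ℕ) : ℝ),
            div_pos (by exact_mod_cast d.2.2.pos) (by exact_mod_cast hq),
            (div_lt_one (by exact_mod_cast hq)).mpr (by exact_mod_cast Nat.lt_of_not_le h)⟩)⟩

/-- The map `ι_q^r` on vertices: vertices of the Cayley graph are sent to themselves
and apices to the corresponding apices of the coned-off horoballs. -/
def iotaMap (P : ι → Subgroup G) : ConedV G P → CuspV G P
  | Sum.inl g => Sum.inl g
  | Sum.inr c => Sum.inr (Sum.inr c)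

/-! ### Dehn fillings -/

/-- The kernel of the Dehn filling determined by `N`. -/
def fillingKernel (N : ι → Subgroup G) : Subgroup G :=
  Subgroup.normalClosure (⋃ i, (N i : Set G))

/-- `N` is a normal subgroup of `P`. -/
def IsNormalIn (N P : Subgroup G) : Prop :=
  N ≤ P ∧ ∀ p ∈ P, ∀ x ∈ N, p * x * p⁻¹ ∈ N

/-- The inclusion `H ≤ G` respects the peripheral structure `D` on `H`: every member of
`D` is conjugate in `G` into a member of `P`. -/
def RespectsPeriph (P : ι → Subgroup G) (H : Subgroup G) {κ : Type u}
    (D : κ → Subgroup ↥H) : Prop :=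
  ∀ j : κ, ∃ (c : G) (i : ι), (D j).map H.subtype ≤ conjSubgroup c (P i)

/-- The filling determined by `N` is an `H`-filling with respect to the peripheral
structure `D` on `H`. -/
def IsHFilling (P : ι → Subgroup G) (N : ι → Subgroup G) (H : Subgroup G) {κ : Type u}
    (D : κ → Subgroup ↥H) : Prop :=
  ∀ (g : G) (i : ι), ¬ ((H ⊓ conjSubgroup g (P i) : Subgroup G) : Set G).Finite →
    ∃ (s : ↥H) (j : κ),
      conjSubgroup g (N i) ≤ conjSubgroup (s : G) ((D j).map H.subtype)

/-- The kernel of the induced filling of `H`. -/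
def inducedKernel (H : Subgroup G) {κ : Type u} (D : κ → Subgroup ↥H)
    (c : κ → G) (sel : κ → ι) (N : ι → Subgroup G) : Subgroup ↥H :=
  Subgroup.normalClosure
    (⋃ j, ((Subgroup.comap H.subtype (conjSubgroup (c j) (N (sel j))) ⊓ D j : Subgroup ↥H) :
      Set ↥H))

instance fillingKernel_normal (N : ι → Subgroup G) : (fillingKernel N).Normal :=
  Subgroup.normalClosure_normal

instance inducedKernel_normal (H : Subgroup G) {κ : Type u} (D : κ → Subgroup ↥H)
    (c : κ → G) (sel : κ → ι) (N : ι → Subgroup G) :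
    (inducedKernel H D c sel N).Normal :=
  Subgroup.normalClosure_normal

/-- `f` is the extension of the inclusion `H ≤ G` to the coned-off Cayley graphs,
with respect to the conjugating elements `c` and the assignment `sel` of peripherals. -/
def IsExtensionOfInclusion (P : ι → Subgroup G) (H : Subgroup G) {κ : Type u}
    (D : κ → Subgroup ↥H) (c : κ → G) (sel : κ → ι)
    (f : ConedV ↥H D → ConedV G P) : Prop :=
  (∀ h : ↥H, f (Sum.inl h) = Sum.inl (h : G)) ∧
  (∀ (j : κ) (s : ↥H), f (Sum.inr ⟨j, QuotientGroup.mk s⟩) =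
      Sum.inr ⟨sel j, QuotientGroup.mk ((s : G) * c j)⟩)



/-! ### Auxiliary lemmas for convexity of coned-off horoballs -/

section HoroballConvexity

variable {G : Type u} [Group G] {ι : Type u} {P : ι → Subgroup G} {X : Set G}
  {Xi : ι → Set G} {r : ℕ}

/-- The coset over which a vertex of the cusped graph lives (`none` for depth-0 vertices). -/
def cosetOf (P : ι → Subgroup G) : CuspV G P → Option (Coset P)
  | Sum.inl _ => none
  | Sum.inr (Sum.inl d) => some ⟨d.1, QuotientGroup.mk d.2.1⟩
  | Sum.inr (Sum.inr c) => some c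

/-- The group element carried by a positive-depth horoball vertex. -/
def baseElt (P : ι → Subgroup G) : CuspV G P → G
  | Sum.inr (Sum.inl d) => d.2.1
  | _ => 1

lemma inHoro_iff_cosetOf {c : Coset P} {v : CuspV G P} (hv : 1 ≤ cuspDepth r v) :
    inHoro P c v ↔ cosetOf P v = some c := by
  rcases v with g | d | c'
  · simp [cuspDepth] at hv
  · simp [inHoro, cosetOf]
  · simp [inHoro, cosetOf]

lemma adj_depth (hr : 1 ≤ r) {a b : CuspV G P}
    (h : (cusped G P X Xi r).Adj a b) :
    cuspDepth r b ≤ cuspDepth r a + 1 ∨ r ≤ cuspDepth r a := by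
  rw [cusped, SimpleGraph.fromRel_adj] at h
  obtain ⟨-, h⟩ := h
  rcases a with g | d | ca
  · rcases b with g' | e | cb
    · left; simp [cuspDepth]
    · rcases h with h | h
      · simp only [cuspRel] at h
        left
        simp [cuspDepth, h.2]
      · exact (h : False).elim
    · rcases h with h | h
      · simp only [cuspRel] at h
        omega
      · exact (h : False).elim
  · rcases b with g' | e | cb
    · left; simp [cuspDepth]
    · rcases h with h | h
      · obtain ⟨-, h⟩ := h
        rcases h with ⟨-, h⟩ | ⟨h, -⟩
        · left; simp only [cuspDepth]; omega
        · left; simp only [cuspDepth, h]; omega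
      · obtain ⟨-, h⟩ := h
        rcases h with ⟨-, h⟩ | ⟨h, -⟩
        · left; simp only [cuspDepth]; omega
        · left; simp only [cuspDepth, h]; omega
    · rcases h with h | h
      · obtain ⟨-, h, -⟩ := h
        right; simpa [cuspDepth] using h
      · exact (h : False).elim
  · right; simp [cuspDepth]

lemma walk_to_apex_len (hr : 1 ≤ r) :
    ∀ {v w : CuspV G P} (q : (cusped G P X Xi r).Walk v w),
      r + 1 ≤ cuspDepth r w → r + 1 ≤ q.length + cuspDepth r v := by
  intro v w q
  induction q with
  | nil => intro hw; omega
  | cons h q ih =>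
      intro hw
      have := ih hw
      rcases adj_depth hr h with h' | h' <;>
        simp only [SimpleGraph.Walk.length_cons] <;> omega

lemma walk_depth_ge (hr : 1 ≤ r) {L : ℕ} (hLr : L ≤ r) :
    ∀ {v w : CuspV G P} (q : (cusped G P X Xi r).Walk v w),
      L ≤ cuspDepth r w → L ≤ q.length + cuspDepth r v := by
  intro v w q
  induction q with
  | nil => intro hw; omega
  | cons h q ih =>
      intro hw
      have := ih hw
      rcases adj_depth hr h with h' | h' <;>
        simp only [SimpleGraph.Walk.length_cons] <;> omega

lemma rel_coset {a b : CuspV G P}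
    (h : cuspRel P X Xi r a b)
    (ha : 1 ≤ cuspDepth r a) (hb : 1 ≤ cuspDepth r b) :
    cosetOf P a = cosetOf P b := by
  rcases a with g | ⟨i, g, m⟩ | ca
  · simp [cuspDepth] at ha
  · rcases b with g' | ⟨i', g', m'⟩ | ⟨j, q⟩
    · simp [cuspDepth] at hb
    · obtain ⟨hi, hrest⟩ := h
      dsimp at hi
      subst hi
      rcases hrest with ⟨hg, -⟩ | ⟨-, -, hmem, -⟩
      · dsimp at hg; subst hg; rfl
      · simp only [cosetOf, Option.some_inj]
        rw [show (QuotientGroup.mk g : G ⧸ P i) = QuotientGroup.mk g' from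
          QuotientGroup.eq.mpr hmem]
    · obtain ⟨hi, -, hq⟩ := h
      dsimp at hi hq
      subst hi
      subst hq
      rfl
  · rcases b with g' | e | cb <;> exact (h : False).elim

lemma adj_coset {a b : CuspV G P}
    (h : (cusped G P X Xi r).Adj a b)
    (ha : 1 ≤ cuspDepth r a) (hb : 1 ≤ cuspDepth r b) :
    cosetOf P a = cosetOf P b := by
  rw [cusped, SimpleGraph.fromRel_adj] at h
  obtain ⟨-, h | h⟩ := h
  · exact rel_coset h ha hb
  · exact (rel_coset h hb ha).symm

lemma walk_in_coset (hr : 1 ≤ r) {L : ℕ} (hLr : L ≤ r) :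
    ∀ {v w : CuspV G P} (q : (cusped G P X Xi r).Walk v w), L ≤ cuspDepth r w →
      q.length < L →
      ∀ u ∈ q.support, 1 ≤ cuspDepth r u ∧ cosetOf P u = cosetOf P w := by
  intro v w q
  induction q with
  | nil =>
      intro hw _ u hu
      rw [SimpleGraph.Walk.support_nil, List.mem_singleton] at hu
      subst hu
      exact ⟨by omega, rfl⟩
  | cons h q ih =>
      intro hw hql u hu
      rw [SimpleGraph.Walk.support_cons, List.mem_cons] at hu
      have hql' : q.length < L := by
        simp only [SimpleGraph.Walk.length_cons] at hql; omega
      have hb1 := ih hw hql' _ q.start_mem_support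
      rcases hu with rfl | hu
      · have hge := walk_depth_ge hr hLr (SimpleGraph.Walk.cons h q) hw
        simp only [SimpleGraph.Walk.length_cons] at hge hql
        have ha1 : 1 ≤ cuspDepth r u := by omega
        exact ⟨ha1, (adj_coset h ha1 hb1.1).trans hb1.2⟩
      · exact ih hw hql' u hu

/-- Flattening a vertex up to depth `L`. -/
def flat (Lp : ℕ+) : CuspV G P → CuspV G P
  | Sum.inl g => Sum.inl g
  | Sum.inr (Sum.inr c) => Sum.inr (Sum.inr c)
  | Sum.inr (Sum.inl ⟨i, g, m⟩) =>
      if (m : ℕ) < (Lp : ℕ) then Sum.inr (Sum.inl ⟨i, g, Lp⟩)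
      else Sum.inr (Sum.inl ⟨i, g, m⟩)

lemma flat_eq_self (r : ℕ) {Lp : ℕ+} {v : CuspV G P} (h : (Lp : ℕ) ≤ cuspDepth r v) :
    flat (P := P) Lp v = v := by
  rcases v with g | ⟨i, g, m⟩ | c
  · rfl
  · simp only [cuspDepth] at h
    simp only [flat]
    rw [if_neg (by omega)]
  · rfl

lemma flat_rel (hr : 1 ≤ r) {Lp : ℕ+} (hLr : (Lp : ℕ) ≤ r) {a b : CuspV G P}
    (hne : a ≠ b) (h : cuspRel P X Xi r a b)
    (ha : 1 ≤ cuspDepth r a) (hb : 1 ≤ cuspDepth r b) :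
    flat (P := P) Lp a = flat Lp b ∨
      ((cusped G P X Xi r).Adj (flat Lp a) (flat Lp b) ∧
        (cuspDepth r a < (Lp : ℕ) ↔ cuspDepth r b < (Lp : ℕ))) := by
  rcases a with g | ⟨i, g, m⟩ | ca
  · simp [cuspDepth] at ha
  · rcases b with g' | ⟨i', g', m'⟩ | ⟨j, q⟩
    · simp [cuspDepth] at hb
    · obtain ⟨hi, hrest⟩ := h
      dsimp at hi
      subst hi
      rcases hrest with ⟨hg, hm⟩ | ⟨hm, hgg, hmem, hwl⟩
      · dsimp at hg hm
        subst hg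
        by_cases hL : (Lp : ℕ) ≤ (m : ℕ)
        · right
          rw [flat_eq_self r (by simpa [cuspDepth] using hL),
            flat_eq_self r (v := Sum.inr (Sum.inl ⟨i, g, m'⟩))
              (by simp only [cuspDepth]; omega)]
          refine ⟨?_, by simp only [cuspDepth]; omega⟩
          rw [cusped, SimpleGraph.fromRel_adj]
          exact ⟨hne, Or.inl ⟨rfl, Or.inl ⟨rfl, hm⟩⟩⟩
        · left
          simp only [flat]
          rw [if_pos (by omega)]
          by_cases hL2 : (m' : ℕ) < (Lp : ℕ)
          · rw [if_pos hL2]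
          · have : m' = Lp := PNat.coe_injective (by omega)
            subst this
            rw [if_neg hL2]
      · dsimp at hm hgg hmem hwl
        subst hm
        by_cases hL : (Lp : ℕ) ≤ (m : ℕ)
        · right
          rw [flat_eq_self r (by simpa [cuspDepth] using hL),
            flat_eq_self r (v := Sum.inr (Sum.inl ⟨i, g', m⟩))
              (by simpa [cuspDepth] using hL)]
          refine ⟨?_, Iff.rfl⟩
          rw [cusped, SimpleGraph.fromRel_adj]
          exact ⟨hne, Or.inl ⟨rfl, Or.inr ⟨rfl, hgg, hmem, hwl⟩⟩⟩
        · right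
          simp only [flat]
          rw [if_pos (by omega), if_pos (by omega)]
          refine ⟨?_, by simp only [cuspDepth]⟩
          rw [cusped, SimpleGraph.fromRel_adj]
          refine ⟨fun hcon => hgg (congrArg (baseElt P) hcon), Or.inl ⟨rfl, Or.inr
            ⟨rfl, hgg, hmem, ?_⟩⟩⟩
          show wlen (Xi i) (g⁻¹ * g') ≤ ((2 ^ (Lp : ℕ) : ℕ) : ℕ∞)
          refine le_trans hwl ?_
          have h2 : (2 : ℕ) ^ (m : ℕ) ≤ 2 ^ (Lp : ℕ) :=
            Nat.pow_le_pow_right (by norm_num) (by omega)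
          exact_mod_cast h2
    · obtain ⟨hi, hrm, hq⟩ := h
      dsimp at hi hrm hq
      right
      rw [flat_eq_self r (by simp only [cuspDepth]; omega),
        flat_eq_self r (v := Sum.inr (Sum.inr ⟨j, q⟩)) (by simp only [cuspDepth]; omega)]
      refine ⟨?_, by simp only [cuspDepth]; omega⟩
      rw [cusped, SimpleGraph.fromRel_adj]
      exact ⟨hne, Or.inl ⟨hi, hrm, hq⟩⟩
  · rcases b with g' | e | cb <;> exact (h : False).elim

lemma flat_adj (hr : 1 ≤ r) {Lp : ℕ+} (hLr : (Lp : ℕ) ≤ r) {a b : CuspV G P}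
    (h : (cusped G P X Xi r).Adj a b)
    (ha : 1 ≤ cuspDepth r a) (hb : 1 ≤ cuspDepth r b) :
    flat (P := P) Lp a = flat Lp b ∨
      ((cusped G P X Xi r).Adj (flat Lp a) (flat Lp b) ∧
        (cuspDepth r a < (Lp : ℕ) ↔ cuspDepth r b < (Lp : ℕ))) := by
  rw [cusped, SimpleGraph.fromRel_adj] at h
  obtain ⟨hne, h | h⟩ := h
  · exact flat_rel hr hLr hne h ha hb
  · rcases flat_rel hr hLr (Ne.symm hne) h hb ha with h' | ⟨h1, h2⟩
    · exact Or.inl h'.symm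
    · exact Or.inr ⟨h1.symm, h2.symm⟩

lemma flatten_walk (hr : 1 ≤ r) {Lp : ℕ+} (hLr : (Lp : ℕ) ≤ r) :
    ∀ {v w : CuspV G P} (q : (cusped G P X Xi r).Walk v w),
      (∀ u ∈ q.support, 1 ≤ cuspDepth r u) →
      ∃ q' : (cusped G P X Xi r).Walk (flat Lp v) (flat Lp w),
        q'.length ≤ q.length ∧
        ((∃ d ∈ q.darts, (Lp : ℕ) ≤ cuspDepth r d.toProd.1 ∧
            cuspDepth r d.toProd.2 < (Lp : ℕ)) → q'.length < q.length) := by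
  intro v w q
  induction q with
  | nil => exact fun _ => ⟨SimpleGraph.Walk.nil, le_refl _, by simp⟩
  | cons h q ih =>
      intro hs
      have ha := hs _ (SimpleGraph.Walk.start_mem_support _)
      have hs' : ∀ u ∈ q.support, 1 ≤ cuspDepth r u := by
        intro u hu
        apply hs u
        rw [SimpleGraph.Walk.support_cons, List.mem_cons]
        exact Or.inr hu
      have hb := hs' _ q.start_mem_support
      obtain ⟨q'', h1, h2⟩ := ih hs'
      rcases flat_adj hr hLr h ha hb with heq | ⟨hadj, hiff⟩
      · refine ⟨q''.copy heq.symm rfl, ?_, fun _ => ?_⟩ <;>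
          simp only [SimpleGraph.Walk.length_copy, SimpleGraph.Walk.length_cons] <;>
          omega
      · refine ⟨SimpleGraph.Walk.cons hadj q'', ?_, ?_⟩
        · simp only [SimpleGraph.Walk.length_cons]; omega
        · rintro ⟨d, hd, hd1, hd2⟩
          rw [SimpleGraph.Walk.darts_cons, List.mem_cons] at hd
          rcases hd with rfl | hd
          · simp only [SimpleGraph.Dart.toProd] at hd1 hd2
            omega
          · have := h2 ⟨d, hd, hd1, hd2⟩
            simp only [SimpleGraph.Walk.length_cons]
            omega

lemma cross_dart {Lp : ℕ+} {w : CuspV G P} :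
    ∀ {v : CuspV G P} (q : (cusped G P X Xi r).Walk v w),
      (Lp : ℕ) ≤ cuspDepth r v → cuspDepth r w < (Lp : ℕ) →
      ∃ d ∈ q.darts, (Lp : ℕ) ≤ cuspDepth r d.toProd.1 ∧
        cuspDepth r d.toProd.2 < (Lp : ℕ) := by
  intro v q
  induction q with
  | nil => intro hv hw; omega
  | @cons a b w' h q ih =>
      intro hv hw
      by_cases hu : cuspDepth r b < (Lp : ℕ)
      · refine ⟨⟨(a, b), h⟩, ?_, hv, hu⟩
        rw [SimpleGraph.Walk.darts_cons, List.mem_cons]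
        exact Or.inl rfl
      · obtain ⟨d, hd, hd1, hd2⟩ := ih (by omega) hw
        refine ⟨d, ?_, hd1, hd2⟩
        rw [SimpleGraph.Walk.darts_cons, List.mem_cons]
        exact Or.inr hd

lemma climb (hr : 1 ≤ r) {Lp : ℕ+} (hLpr : (Lp : ℕ) ≤ r) (i : ι) (g : G) :
    ∀ (k : ℕ) (m : ℕ+), r ≤ (m : ℕ) + k → (Lp : ℕ) ≤ (m : ℕ) →
      ∃ w : (cusped G P X Xi r).Walk (Sum.inr (Sum.inl ⟨i, g, m⟩))
          (Sum.inr (Sum.inr ⟨i, QuotientGroup.mk g⟩)),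
        w.length ≤ k + 1 ∧
        ∀ u ∈ w.support, u ∈ LHoroball P r ⟨i, QuotientGroup.mk g⟩ (Lp : ℕ) := by
  have single : ∀ (m : ℕ+), r ≤ (m : ℕ) → (Lp : ℕ) ≤ (m : ℕ) →
      ∃ w : (cusped G P X Xi r).Walk (Sum.inr (Sum.inl ⟨i, g, m⟩))
          (Sum.inr (Sum.inr ⟨i, QuotientGroup.mk g⟩)),
        w.length ≤ 1 ∧
        ∀ u ∈ w.support, u ∈ LHoroball P r ⟨i, QuotientGroup.mk g⟩ (Lp : ℕ) := by
    intro m hrm hLm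
    have hLr : (Lp : ℕ) ≤ r + 1 := by omega
    clear hLpr
    have hadj : (cusped G P X Xi r).Adj (Sum.inr (Sum.inl ⟨i, g, m⟩))
        (Sum.inr (Sum.inr ⟨i, QuotientGroup.mk g⟩)) := by
      rw [cusped, SimpleGraph.fromRel_adj]
      exact ⟨by simp, Or.inl ⟨rfl, hrm, rfl⟩⟩
    refine ⟨SimpleGraph.Walk.cons hadj SimpleGraph.Walk.nil, by simp, ?_⟩
    intro u hu
    rw [SimpleGraph.Walk.support_cons, SimpleGraph.Walk.support_nil,
      List.mem_cons, List.mem_singleton] at hu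
    rcases hu with rfl | rfl
    · exact ⟨rfl, hLm⟩
    · exact ⟨rfl, by simpa only [cuspDepth] using hLr⟩
  intro k
  induction k with
  | zero =>
      intro m hk hLm
      exact single m (by omega) hLm
  | succ k ihk =>
      intro m hk hLm
      by_cases hrm : r ≤ (m : ℕ)
      · obtain ⟨w, hw1, hw2⟩ := single m hrm hLm
        exact ⟨w, by omega, hw2⟩
      · have hadj : (cusped G P X Xi r).Adj (Sum.inr (Sum.inl ⟨i, g, m⟩))
            (Sum.inr (Sum.inl ⟨i, g, m + 1⟩)) := by
          rw [cusped, SimpleGraph.fromRel_adj]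
          refine ⟨?_, Or.inl ⟨rfl, Or.inl ⟨rfl, ?_⟩⟩⟩
          · intro hcon
            have hdep := congrArg (cuspDepth r) hcon
            simp only [cuspDepth, PNat.add_coe, PNat.one_coe] at hdep
            omega
          · show ((m + 1 : ℕ+) : ℕ) = (m : ℕ) + 1
            simp [PNat.add_coe]
        obtain ⟨w, hw1, hw2⟩ := ihk (m + 1)
          (by simp only [PNat.add_coe, PNat.one_coe]; omega)
          (by simp only [PNat.add_coe, PNat.one_coe]; omega)
        refine ⟨SimpleGraph.Walk.cons hadj w, ?_, ?_⟩
        · simp only [SimpleGraph.Walk.length_cons]; omega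
        · intro u hu
          rw [SimpleGraph.Walk.support_cons, List.mem_cons] at hu
          rcases hu with rfl | hu
          · exact ⟨rfl, hLm⟩
          · exact hw2 u hu

lemma exists_geodesic_to_apex (hr : 1 ≤ r) {Lp : ℕ+} (hLr : (Lp : ℕ) ≤ r)
    {c : Coset P} {x : CuspV G P} (hx : x ∈ LHoroball P r c (Lp : ℕ)) :
    ∃ α : (cusped G P X Xi r).Walk x (Sum.inr (Sum.inr c)),
      IsGeodesic (cusped G P X Xi r) α ∧
      ∀ u ∈ α.support, u ∈ LHoroball P r c (Lp : ℕ) := by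
  obtain ⟨hc, hd⟩ := hx
  rcases x with g | ⟨i, g, m⟩ | c'
  · have h0 : cuspDepth r (Sum.inl g : CuspV G P) = 0 := rfl
    have hLp : 1 ≤ (Lp : ℕ) := Lp.one_le
    omega
  · have hc' : (⟨i, QuotientGroup.mk g⟩ : Coset P) = c := hc
    subst hc'
    have hdm : (Lp : ℕ) ≤ (m : ℕ) := hd
    obtain ⟨w, hw1, hw2⟩ := climb (X := X) (Xi := Xi) hr hLr i g (r - (m : ℕ)) m
      (by omega) hdm
    refine ⟨w, ?_, hw2⟩
    intro q
    have hq := walk_to_apex_len hr q (by simp only [cuspDepth]; omega)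
    have hdq : cuspDepth r (Sum.inr (Sum.inl ⟨i, g, m⟩) : CuspV G P) = (m : ℕ) := rfl
    rw [hdq] at hq
    by_cases hmr : (m : ℕ) ≤ r
    · omega
    · have hq1 : 1 ≤ q.length := by
        rcases Nat.eq_zero_or_pos q.length with h0 | h0
        · exact absurd (SimpleGraph.Walk.eq_of_length_eq_zero h0) (by simp)
        · omega
      omega
  · have hc' : c' = c := hc
    subst hc'
    refine ⟨SimpleGraph.Walk.nil, fun q => Nat.zero_le _, ?_⟩
    intro u hu
    rw [SimpleGraph.Walk.support_nil, List.mem_singleton] at hu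
    subst hu
    refine ⟨rfl, ?_⟩
    show (Lp : ℕ) ≤ r + 1
    omega

end HoroballConvexity

/-- Coned-off `L`-horoballs are convex in the coned-off cusped Cayley graph for `L > δ`. -/
theorem coned_L_horoball_convex
    {G : Type u} [Group G] (hGfg : Group.FG G)
    {ι : Type u} [Finite ι] (P : ι → Subgroup G)
    (hPinf : ∀ i, ((P i : Set G)).Infinite)
    (X : Set G) (hXgen : Subgroup.closure X = ⊤) (hPhe : HypEmb P X)
    (Xi : ι → Set G) (hXi : ∀ i, (Xi i).Finite ∧ Xi i ⊆ (P i : Set G))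
    (δ : ℝ) (hδ0 : 0 ≤ δ)
    (hδ : ∀ r : ℕ, SlimTriangles (cusped G P X Xi r) δ)
    (L r : ℕ) (hLδ : δ < (L : ℝ)) (hLr : L ≤ r) (c : Coset P) :
    ∀ x ∈ LHoroball P r c L, ∀ y ∈ LHoroball P r c L,
      ∀ p : (cusped G P X Xi r).Walk x y, IsGeodesic (cusped G P X Xi r) p →
        ∀ w ∈ p.support, w ∈ LHoroball P r c L := by
  classical
  intro x hx y hy p hp w hw
  have hL1 : 1 ≤ L := by
    have h0 : (0 : ℝ) < (L : ℝ) := lt_of_le_of_lt hδ0 hLδ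
    exact_mod_cast Nat.one_le_iff_ne_zero.mpr (by exact_mod_cast h0.ne')
  have hr1 : 1 ≤ r := hL1.trans hLr
  set Lp : ℕ+ := ⟨L, hL1⟩ with hLpdef
  have hLpL : (Lp : ℕ) = L := rfl
  have hLr' : (Lp : ℕ) ≤ r := by rw [hLpL]; exact hLr
  have hx' : x ∈ LHoroball P r c (Lp : ℕ) := by rw [hLpL]; exact hx
  have hy' : y ∈ LHoroball P r c (Lp : ℕ) := by rw [hLpL]; exact hy
  obtain ⟨α, hαg, hαs⟩ := exists_geodesic_to_apex (X := X) (Xi := Xi) hr1 hLr' hx'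
  obtain ⟨β, hβg, hβs⟩ := exists_geodesic_to_apex (X := X) (Xi := Xi) hr1 hLr' hy'
  have hgood : ∀ v ∈ p.support, 1 ≤ cuspDepth r v ∧ cosetOf P v = some c := by
    intro v hv
    obtain ⟨w', hw'mem, hw'd⟩ :=
      hδ r x y (Sum.inr (Sum.inr c)) p β α hp hβg hαg v hv
    have hw'H : w' ∈ LHoroball P r c (Lp : ℕ) := by
      rcases hw'mem with h | h
      · exact hβs _ h
      · exact hαs _ h
    have hreach : (cusped G P X Xi r).Reachable v w' := by
      have h1 : (cusped G P X Xi r).Reachable x v := ⟨p.takeUntil v hv⟩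
      have hxy : (cusped G P X Xi r).Reachable x y := ⟨p⟩
      rcases hw'mem with h | h
      · have h2 : (cusped G P X Xi r).Reachable y w' := ⟨β.takeUntil w' h⟩
        exact h1.symm.trans (hxy.trans h2)
      · have h2 : (cusped G P X Xi r).Reachable x w' := ⟨α.takeUntil w' h⟩
        exact h1.symm.trans h2
    obtain ⟨q, hqlen⟩ := hreach.exists_walk_length_eq_dist
    have hqL : q.length < L := by
      have hd1 : ((cusped G P X Xi r).dist v w' : ℝ) < (L : ℝ) :=
        lt_of_le_of_lt hw'd hLδ
      have hd2 : (cusped G P X Xi r).dist v w' < L := by exact_mod_cast hd1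
      omega
    have hw'd2 : L ≤ cuspDepth r w' := hw'H.2
    have hall := walk_in_coset (L := L) hr1 hLr q hw'd2 (by omega)
      v q.start_mem_support
    refine ⟨hall.1, hall.2.trans ?_⟩
    exact (inHoro_iff_cosetOf (le_trans hL1 hw'd2)).mp hw'H.1
  have hdepth : ∀ v ∈ p.support, L ≤ cuspDepth r v := by
    by_contra hcon
    push_neg at hcon
    obtain ⟨v0, hv0, hv0d⟩ := hcon
    obtain ⟨p', hple, hstrict⟩ := flatten_walk hr1 hLr' p (fun u hu => (hgood u hu).1)
    have hcross : ∃ d ∈ p.darts, (Lp : ℕ) ≤ cuspDepth r d.toProd.1 ∧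
        cuspDepth r d.toProd.2 < (Lp : ℕ) := by
      obtain ⟨d, hd, hd1, hd2⟩ := cross_dart (p.takeUntil v0 hv0) hx'.2
        (by rw [hLpL]; exact hv0d)
      exact ⟨d, p.darts_takeUntil_subset hv0 hd, hd1, hd2⟩
    have hlt := hstrict hcross
    have hle := hp (p'.copy (flat_eq_self r hx'.2) (flat_eq_self r hy'.2))
    rw [SimpleGraph.Walk.length_copy] at hle
    omega
  refine ⟨?_, hdepth w hw⟩
  exact (inHoro_iff_cosetOf (le_trans hL1 (hdepth w hw))).mpr (hgood w hw).2


end GpQc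
end
end

section
/- For all δ, k, l > 0 there exists λ = λ(δ,k,l) with the following property. Let 𝒜 be a coned-off Cayley graph Γ̂(G,𝒪,X) whose path metric is δ-hyperbolic, let a ∈ 𝒜 be an apex, let c_1, c_2 be (k,l)-quasi-geodesics that share the endpoint a and do not pass through a elsewhere, and let γ_1, γ_2 be geodesics with the same endpoints as c_1 and c_2 respectively. Then ∠_a(c_1,c_2) − λ ≤ ∠_a(γ_1,γ_2) ≤ ∠_a(c_1,c_2) + λ. In particular, ∠_a(c_1,c_2) = ∞ if and only if ∠_a(γ_1,γ_2) = ∞. -/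
set_option autoImplicit false
set_option maxHeartbeats 1000000

noncomputable section

namespace GpQc

universe u

open SimpleGraph

/-! ### Basic metric notions on graphs -/

variable {V W : Type*}

/-! ### Graphs with a group action -/

variable {G : Type u} [Group G]

variable {ι : Type u}

/-! ### Auxiliary machinery -/

section Aux

open SimpleGraph Walk

variable {V' : Type*} {Γ : SimpleGraph V'} {u v x y w : V'}

/-- Initial segment of a walk. -/
def wtake {u v : V'} : (p : Γ.Walk u v) → (n : ℕ) → Γ.Walk u (p.getVert n)
  | .nil, _ => Walk.nil
  | .cons _ _, 0 => Walk.nil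
  | .cons h q, (n+1) => Walk.cons h (wtake q n)

lemma length_wtake (p : Γ.Walk u v) (n : ℕ) : (wtake p n).length = min n p.length := by
  induction p generalizing n with
  | nil => simp [wtake]
  | cons h q ih =>
    cases n with
    | zero => simp [wtake]; rfl
    | succ n => simp [wtake, ih, Nat.succ_min_succ]

lemma support_wtake_subset (p : Γ.Walk u v) (n : ℕ) : (wtake p n).support ⊆ p.support := by
  induction p generalizing n with
  | nil => simp [wtake]
  | cons h q ih =>
    cases n with
    | zero => intro z hz; simp only [wtake] at hz; exact List.mem_cons.mpr (Or.inl (List.mem_singleton.mp hz))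
    | succ n =>
      intro z hz
      exact List.mem_cons.mpr ((List.mem_cons.mp hz).imp id (fun h' => ih n h'))

lemma getVert_wtake (p : Γ.Walk u v) {n m : ℕ} (h : m ≤ n) :
    (wtake p n).getVert m = p.getVert m := by
  induction p generalizing n m with
  | nil => simp [wtake]
  | cons hadj q ih =>
    cases n with
    | zero => interval_cases m; simp [wtake]; rfl
    | succ n =>
      cases m with
      | zero => simp [wtake]
      | succ m =>
        simp only [wtake, getVert_cons_succ]
        exact ih (Nat.succ_le_succ_iff.mp h)

lemma length_drop (p : Γ.Walk u v) (n : ℕ) : (p.drop n).length = p.length - n := by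
  induction p generalizing n with
  | nil => cases n <;> simp [Walk.drop]
  | cons h q ih =>
    cases n with
    | zero => simp [Walk.drop]
    | succ n => simp [Walk.drop, ih]

lemma getVert_drop (p : Γ.Walk u v) (n m : ℕ) : (p.drop n).getVert m = p.getVert (n + m) := by
  induction p generalizing n with
  | nil => cases n <;> rfl
  | cons h q ih =>
    cases n with
    | zero => simp [Walk.drop, getVert_copy]
    | succ n =>
      simp only [Walk.drop, getVert_copy]
      have hnm : n + 1 + m = (n + m) + 1 := by omega
      exact (ih n).trans (by rw [hnm, getVert_cons_succ])

lemma support_drop_subset (p : Γ.Walk u v) (n : ℕ) : (p.drop n).support ⊆ p.support := by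
  induction p generalizing n with
  | nil => cases n <;> exact fun z hz => hz
  | cons h q ih =>
    cases n with
    | zero => simp [Walk.drop, support_copy]
    | succ n =>
      simp only [Walk.drop, support_copy, support_cons]
      exact fun z hz => List.subset_cons_self _ _ (ih n hz)

lemma support_drop_subset_tail (p : Γ.Walk u v) (n : ℕ) (hp : ¬ p.Nil) :
    (p.drop (n+1)).support ⊆ p.support.tail := by
  cases p with
  | nil => simp at hp
  | cons h q =>
    simp only [Walk.drop, support_copy, support_cons, List.tail_cons]
    exact support_drop_subset q n

/-- The segment of a walk between two indices. -/
def wseg (p : Γ.Walk u v) (i j : ℕ) (h : i ≤ j) : Γ.Walk (p.getVert i) (p.getVert j) :=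
  (wtake (p.drop i) (j - i)).copy rfl (by rw [getVert_drop, Nat.add_sub_cancel' h])

lemma length_wseg (p : Γ.Walk u v) {i j : ℕ} (h : i ≤ j) :
    (wseg p i j h).length = min (j - i) (p.length - i) := by
  simp [wseg, length_wtake, length_drop]

lemma support_wseg_subset (p : Γ.Walk u v) {i j : ℕ} (h : i ≤ j) :
    (wseg p i j h).support ⊆ p.support := by
  simp only [wseg, support_copy]
  exact fun z hz => support_drop_subset _ _ (support_wtake_subset _ _ hz)

lemma support_wseg_subset_tail (p : Γ.Walk u v) {i j : ℕ} (h : i ≤ j) (h1 : 1 ≤ i)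
    (hp : ¬ p.Nil) : (wseg p i j h).support ⊆ p.support.tail := by
  obtain ⟨m, rfl⟩ : ∃ m, i = m + 1 := ⟨i - 1, by omega⟩
  simp only [wseg, support_copy]
  exact fun z hz => support_drop_subset_tail _ _ hp (support_wtake_subset _ _ hz)

lemma getVert_wseg (p : Γ.Walk u v) {i j m : ℕ} (h : i ≤ j) (hm : m ≤ j - i) :
    (wseg p i j h).getVert m = p.getVert (i + m) := by
  simp only [wseg, getVert_copy]
  rw [getVert_wtake _ hm, getVert_drop]

lemma reachable_of_mem_support {p : Γ.Walk u v} (h : w ∈ p.support) : Γ.Reachable u w := by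
  obtain ⟨n, rfl, -⟩ := Walk.mem_support_iff_exists_getVert.mp h
  exact (wtake p n).reachable

lemma dist_triangle' (h1 : Γ.Reachable u v) (h2 : Γ.Reachable v w) :
    Γ.dist u w ≤ Γ.dist u v + Γ.dist v w := by
  obtain ⟨p, hp⟩ := h1.exists_walk_length_eq_dist
  obtain ⟨q, hq⟩ := h2.exists_walk_length_eq_dist
  calc Γ.dist u w ≤ (p.append q).length := dist_le _
    _ = _ := by rw [length_append, hp, hq]

lemma dist_getVert_le (p : Γ.Walk u v) {i j : ℕ} (h : i ≤ j) :
    Γ.dist (p.getVert i) (p.getVert j) ≤ j - i := by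
  have h1 := dist_le (wseg p i j h)
  rw [length_wseg] at h1
  exact h1.trans (min_le_left _ _)

lemma dist_le_of_mem_support {p : Γ.Walk u v} (h : w ∈ p.support) : Γ.dist u w ≤ p.length := by
  obtain ⟨n, rfl, hn⟩ := Walk.mem_support_iff_exists_getVert.mp h
  have := dist_getVert_le p (Nat.zero_le n)
  rw [getVert_zero] at this
  omega

lemma getVert_mem_support (p : Γ.Walk u v) (n : ℕ) : p.getVert n ∈ p.support := by
  rcases le_or_gt n p.length with h | h
  · exact Walk.mem_support_iff_exists_getVert.mpr ⟨n, rfl, h⟩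
  · rw [getVert_of_length_le p h.le]; exact p.end_mem_support

lemma mem_support_append {q : Γ.Walk v x} {p : Γ.Walk u v} (h : w ∈ (p.append q).support) :
    w ∈ p.support ∨ w ∈ q.support := by
  rw [support_append] at h
  rcases List.mem_append.mp h with h | h
  · exact Or.inl h
  · exact Or.inr (List.tail_subset _ h)

lemma IsGeodesic.length_eq_dist {p : Γ.Walk u v} (hp : IsGeodesic Γ p) :
    p.length = Γ.dist u v := by
  obtain ⟨q, hq⟩ := p.reachable.exists_walk_length_eq_dist
  exact le_antisymm (hq ▸ hp q) (dist_le p)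

lemma isGeodesic_of_length_le (p : Γ.Walk u v) (h : p.length ≤ Γ.dist u v) :
    IsGeodesic Γ p := fun q => h.trans (dist_le q)

lemma exists_geodesic (h : Γ.Reachable u v) : ∃ p : Γ.Walk u v, IsGeodesic Γ p := by
  obtain ⟨p, hp⟩ := h.exists_walk_length_eq_dist
  exact ⟨p, isGeodesic_of_length_le p hp.le⟩

lemma IsGeodesic.reverse {p : Γ.Walk u v} (hp : IsGeodesic Γ p) : IsGeodesic Γ p.reverse := by
  intro q
  have := hp q.reverse
  simpa [length_reverse] using this

lemma IsGeodesic.dist_getVert {p : Γ.Walk u v} (hp : IsGeodesic Γ p) {i j : ℕ}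
    (hij : i ≤ j) (hj : j ≤ p.length) :
    Γ.dist (p.getVert i) (p.getVert j) = j - i := by
  refine le_antisymm (dist_getVert_le p hij) ?_
  by_contra hlt
  push_neg at hlt
  obtain ⟨q, hq⟩ := (wseg p i j hij).reachable.exists_walk_length_eq_dist
  have hle := hp ((wtake p i).append (q.append (p.drop j)))
  rw [length_append, length_append, length_wtake, length_drop] at hle
  omega

lemma IsGeodesic.wseg {p : Γ.Walk u v} (hp : IsGeodesic Γ p) {i j : ℕ}
    (hij : i ≤ j) (hj : j ≤ p.length) : IsGeodesic Γ (wseg p i j hij) := by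
  apply isGeodesic_of_length_le
  rw [length_wseg, hp.dist_getVert hij hj]
  omega

lemma IsGeodesic.not_mem_support_tail {p : Γ.Walk u v} (hp : IsGeodesic Γ p)
    (hne : ¬ p.Nil) : u ∉ p.support.tail := by
  rw [← Walk.support_tail_of_not_nil p hne]
  intro hmem
  obtain ⟨m, hm, hmlen⟩ := Walk.mem_support_iff_exists_getVert.mp hmem
  rw [Walk.getVert_tail p] at hm
  have hlen : p.tail.length + 1 = p.length := Walk.length_tail_add_one hne
  have h2 : m + 1 ≤ p.length := by omega
  have h3 := hp.dist_getVert (i := 0) (j := m + 1) (by omega) h2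
  rw [Walk.getVert_zero, hm, SimpleGraph.dist_self] at h3
  omega

lemma not_nil_of_ne {p : Γ.Walk u v} (h : u ≠ v) : ¬ p.Nil := by
  intro hn
  apply h
  have h0 : p.length = 0 := Walk.nil_iff_length_eq.mp hn
  have := p.getVert_of_length_le (i := 0) h0.le
  rw [Walk.getVert_zero] at this
  exact this

/-! ### Angle lemmas -/

lemma angle_le_length (v : V') {x y : V'} (p : Γ.Walk x y) (h : v ∉ p.support) :
    angle Γ v x y ≤ (p.length : ℕ∞) :=
  sInf_le ⟨p, h, rfl⟩

lemma angle_exists {v x y : V'} (h : angle Γ v x y ≠ ⊤) :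
    ∃ p : Γ.Walk x y, v ∉ p.support ∧ (p.length : ℕ∞) = angle Γ v x y := by
  classical
  set T : Set ℕ := {n | ∃ p : Γ.Walk x y, v ∉ p.support ∧ p.length = n} with hT
  have hTne : T.Nonempty := by
    rcases Set.eq_empty_or_nonempty T with hE | hNe
    · exfalso
      apply h
      have hS : {n : ℕ∞ | ∃ p : Γ.Walk x y, v ∉ p.support ∧ (p.length : ℕ∞) = n} = ∅ := by
        ext n
        simp only [Set.mem_setOf_eq, Set.mem_empty_iff_false, iff_false]
        rintro ⟨p, hp, rfl⟩
        exact Set.eq_empty_iff_forall_notMem.mp hE p.length ⟨p, hp, rfl⟩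
      rw [angle, hS, sInf_empty]
    · exact hNe
  obtain ⟨p, hp, hlen⟩ := Nat.sInf_mem hTne
  refine ⟨p, hp, le_antisymm ?_ (sInf_le ⟨p, hp, rfl⟩)⟩
  apply le_sInf
  rintro b ⟨q, hq, rfl⟩
  have : sInf T ≤ q.length := Nat.sInf_le ⟨q, hq, rfl⟩
  exact_mod_cast hlen ▸ this

lemma angle_comm (v x y : V') : angle Γ v x y = angle Γ v y x := by
  have key : ∀ x y : V', angle Γ v x y ≤ angle Γ v y x := by
    intro x y
    apply le_sInf
    rintro b ⟨p, hp, rfl⟩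
    have := angle_le_length v p.reverse (by simpa [Walk.support_reverse] using hp)
    simpa [Walk.length_reverse] using this
  exact le_antisymm (key x y) (key y x)

lemma angle_triangle (v x y z : V') :
    angle Γ v x z ≤ angle Γ v x y + angle Γ v y z := by
  rcases eq_or_ne (angle Γ v x y) ⊤ with h1 | h1
  · simp [h1]
  rcases eq_or_ne (angle Γ v y z) ⊤ with h2 | h2
  · simp [h2]
  obtain ⟨p, hp, hpl⟩ := angle_exists h1
  obtain ⟨q, hq, hql⟩ := angle_exists h2
  have hsup : v ∉ (p.append q).support := by
    intro hmem
    rcases mem_support_append hmem with h | h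
    · exact hp h
    · exact hq h
  calc angle Γ v x z ≤ ((p.append q).length : ℕ∞) := angle_le_length v _ hsup
    _ = angle Γ v x y + angle Γ v y z := by
        rw [Walk.length_append, ← hpl, ← hql]; push_cast; ring

lemma natlog_le_sqrt {L : ℕ} {x : ℝ} (hL : (L : ℝ) ≤ x) (hx : 1 ≤ x) :
    (Nat.log 2 L : ℝ) ≤ 3 * Real.sqrt x := by
  have hx0 : (0 : ℝ) < x := lt_of_lt_of_le one_pos hx
  have hsx : (1 : ℝ) ≤ Real.sqrt x := by
    rw [show (1:ℝ) = Real.sqrt 1 by simp]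
    exact Real.sqrt_le_sqrt hx
  rcases Nat.eq_zero_or_pos L with rfl | hL0
  · simp only [Nat.log_zero_right, Nat.cast_zero]
    positivity
  have h2 : ((2 : ℕ) : ℝ) ^ Nat.log 2 L ≤ (L : ℝ) := by
    exact_mod_cast Nat.pow_log_le_self 2 hL0.ne'
  have hlog : (Nat.log 2 L : ℝ) * Real.log 2 ≤ Real.log x := by
    calc (Nat.log 2 L : ℝ) * Real.log 2 = Real.log ((2 : ℝ) ^ Nat.log 2 L) := by
          rw [Real.log_pow]
      _ ≤ Real.log x := Real.log_le_log (by positivity) (by exact_mod_cast h2.trans hL)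
  have hs : Real.log x ≤ 2 * Real.sqrt x := by
    have h1 : Real.log (Real.sqrt x) = Real.log x / 2 := Real.log_sqrt hx0.le
    have h2' : Real.log (Real.sqrt x) ≤ Real.sqrt x - 1 :=
      Real.log_le_sub_one_of_pos (by positivity)
    nlinarith [Real.sqrt_nonneg x]
  have hlog2 : (0.6931471803 : ℝ) < Real.log 2 := Real.log_two_gt_d9
  have ha : (0 : ℝ) ≤ (Nat.log 2 L : ℝ) := Nat.cast_nonneg _
  have h3 : (Nat.log 2 L : ℝ) * 0.6931471803 ≤ 2 * Real.sqrt x := by nlinarith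
  linarith [Real.sqrt_nonneg x, h3]

lemma gromov {δ : ℝ} (hδ0 : 0 ≤ δ) (hslim : SlimTriangles Γ δ) :
    ∀ (n : ℕ) (u v : V') (q : Γ.Walk u v) (σ : Γ.Walk u v), IsGeodesic Γ σ →
      q.length ≤ 2 ^ n → ∀ w ∈ σ.support, ∃ z ∈ q.support, (Γ.dist w z : ℝ) ≤ n * δ + 1 := by
  intro n
  induction n with
  | zero =>
    intro u v q σ hσ hq w hw
    obtain ⟨i, rfl, hi⟩ := Walk.mem_support_iff_exists_getVert.mp hw
    have hσl : σ.length ≤ 1 := le_trans (hσ q) (by simpa using hq)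
    rcases Nat.eq_zero_or_pos i with rfl | hi1
    · refine ⟨u, q.start_mem_support, ?_⟩
      rw [Walk.getVert_zero, SimpleGraph.dist_self]
      norm_num
    · have hv : σ.getVert i = v := σ.getVert_of_length_le (le_trans hσl hi1)
      refine ⟨v, q.end_mem_support, ?_⟩
      rw [hv, SimpleGraph.dist_self]
      norm_num
  | succ n ih =>
    intro u v q σ hσ hq w hw
    by_cases hsmall : q.length ≤ 2 ^ n
    · obtain ⟨z, hz, hd⟩ := ih u v q σ hσ hsmall w hw
      refine ⟨z, hz, hd.trans ?_⟩
      push_cast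
      nlinarith
    · push_neg at hsmall
      have hq2 : q.length ≤ 2 * 2 ^ n := by
        rw [pow_succ] at hq
        omega
      set m := q.length / 2 with hm
      have hm1 : min m q.length = m := min_eq_left (by omega)
      obtain ⟨σ₁, hσ₁⟩ := exists_geodesic (wtake q m).reachable
      obtain ⟨σ₂, hσ₂⟩ := exists_geodesic (q.drop m).reachable
      obtain ⟨w', hw', hdw'⟩ :=
        hslim u v (q.getVert m) σ σ₂.reverse σ₁ hσ hσ₂.reverse hσ₁ w hw
      have hreach_uw : Γ.Reachable u w := reachable_of_mem_support hw
      have hreach_um : Γ.Reachable u (q.getVert m) := (wtake q m).reachable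
      rw [gdist] at hdw'
      rcases hw' with h1 | h1
      · rw [Walk.support_reverse, List.mem_reverse] at h1
        obtain ⟨z, hz, hd⟩ := ih (q.getVert m) v (q.drop m) σ₂ hσ₂
          (by rw [length_drop]; omega) w' h1
        refine ⟨z, support_drop_subset q m hz, ?_⟩
        have hr1 : Γ.Reachable w w' :=
          hreach_uw.symm.trans (hreach_um.trans (reachable_of_mem_support h1))
        have hr2 : Γ.Reachable w' z :=
          (reachable_of_mem_support h1).symm.trans (reachable_of_mem_support hz)
        have htri := dist_triangle' hr1 hr2
        have htri' : (Γ.dist w z : ℝ) ≤ (Γ.dist w w' : ℝ) + (Γ.dist w' z : ℝ) := by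
          exact_mod_cast htri
        push_cast
        nlinarith
      · obtain ⟨z, hz, hd⟩ := ih u (q.getVert m) (wtake q m) σ₁ hσ₁
          (by rw [length_wtake, hm1]; omega) w' h1
        refine ⟨z, support_wtake_subset q m hz, ?_⟩
        have hr1 : Γ.Reachable w w' :=
          hreach_uw.symm.trans (reachable_of_mem_support h1)
        have hr2 : Γ.Reachable w' z :=
          (reachable_of_mem_support h1).symm.trans (reachable_of_mem_support hz)
        have htri := dist_triangle' hr1 hr2
        have htri' : (Γ.dist w z : ℝ) ≤ (Γ.dist w w' : ℝ) + (Γ.dist w' z : ℝ) := by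
          exact_mod_cast htri
        push_cast
        nlinarith

/-- The stability constant for `(k,l)`-quasi-geodesics in a `δ`-slim graph. -/
def rho0 (δ k l : ℝ) : ℝ := (3 * δ * Real.sqrt (6 * k + l + 3) + δ + 2) ^ 2

lemma rho0_nonneg (δ k l : ℝ) : 0 ≤ rho0 δ k l := sq_nonneg _

lemma morse {δ k l : ℝ} (hδ0 : 0 ≤ δ) (hslim : SlimTriangles Γ δ) (hk : 0 < k) (hl : 0 < l)
    {u x : V'} (c : Γ.Walk u x) (hc : IsQuasiGeodesic Γ c k l)
    (γ : Γ.Walk u x) (hγ : IsGeodesic Γ γ) :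
    ∀ s ≤ γ.length, ∃ i ≤ c.length, (Γ.dist (γ.getVert s) (c.getVert i) : ℝ) ≤ rho0 δ k l := by
  classical
  set F : ℕ → ℕ :=
    fun s => sInf {d : ℕ | ∃ i, i ≤ c.length ∧ Γ.dist (γ.getVert s) (c.getVert i) = d} with hF
  have hFmem : ∀ s, ∃ i ≤ c.length, Γ.dist (γ.getVert s) (c.getVert i) = F s := by
    intro s
    obtain ⟨i, hi, hd⟩ := Nat.sInf_mem (⟨_, 0, Nat.zero_le _, rfl⟩ :
      {d : ℕ | ∃ i, i ≤ c.length ∧ Γ.dist (γ.getVert s) (c.getVert i) = d}.Nonempty)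
    exact ⟨i, hi, hd⟩
  have hFle : ∀ s i, i ≤ c.length → F s ≤ Γ.dist (γ.getVert s) (c.getVert i) :=
    fun s i hi => Nat.sInf_le ⟨i, hi, rfl⟩
  have hSne : ((Finset.range (γ.length + 1)).image F).Nonempty :=
    ⟨F 0, Finset.mem_image_of_mem F (by simp)⟩
  set ρ : ℕ := ((Finset.range (γ.length + 1)).image F).max' hSne with hρ
  have hρle : ∀ s ≤ γ.length, F s ≤ ρ := fun s hs =>
    Finset.le_max' _ _ (Finset.mem_image_of_mem F (Finset.mem_range.mpr (by omega)))
  suffices hmain : (ρ : ℝ) ≤ rho0 δ k l by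
    intro s hs
    obtain ⟨i, hi, hd⟩ := hFmem s
    refine ⟨i, hi, ?_⟩
    rw [hd]
    exact le_trans (by exact_mod_cast hρle s hs) hmain
  obtain ⟨s₀, hs₀len, hs₀⟩ : ∃ s₀ ≤ γ.length, F s₀ = ρ := by
    obtain ⟨s₀, hs₀, h⟩ := Finset.mem_image.mp (Finset.max'_mem _ hSne)
    exact ⟨s₀, Nat.lt_succ_iff.mp (Finset.mem_range.mp hs₀), h⟩
  have hwlow : ∀ i, i ≤ c.length → ρ ≤ Γ.dist (γ.getVert s₀) (c.getVert i) :=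
    fun i hi => hs₀ ▸ hFle s₀ i hi
  have hreachγ : ∀ s', Γ.Reachable u (γ.getVert s') := fun s' => (wtake γ s').reachable
  have hreachc : ∀ i, Γ.Reachable u (c.getVert i) := fun i => (wtake c i).reachable
  -- endpoints of the window
  set s₁ := s₀ - 2 * ρ with hs₁
  set s₂ := min (s₀ + 2 * ρ) γ.length with hs₂
  have hs₁₀ : s₁ ≤ s₀ := Nat.sub_le _ _
  have hs₀₂ : s₀ ≤ s₂ := le_min (Nat.le_add_right _ _) hs₀len
  have hs₂len : s₂ ≤ γ.length := min_le_right _ _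
  have hd₁ : Γ.dist (γ.getVert s₁) (γ.getVert s₀) = s₀ - s₁ := hγ.dist_getVert hs₁₀ hs₀len
  have hd₂ : Γ.dist (γ.getVert s₀) (γ.getVert s₂) = s₂ - s₀ := hγ.dist_getVert hs₀₂ hs₂len
  obtain ⟨i₁, hi₁, hdi₁⟩ := hFmem s₁
  obtain ⟨i₂, hi₂, hdi₂⟩ := hFmem s₂
  have hgs₁ : F s₁ ≤ ρ := hρle s₁ (le_trans hs₁₀ hs₀len)
  have hgs₂ : F s₂ ≤ ρ := hρle s₂ hs₂len
  -- the connectors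
  obtain ⟨q₁, hq₁⟩ :=
    ((hreachγ s₁).symm.trans (hreachc i₁)).exists_walk_length_eq_dist
  obtain ⟨q₂, hq₂⟩ :=
    ((hreachc i₂).symm.trans (hreachγ s₂)).exists_walk_length_eq_dist
  have hq₁len : q₁.length = F s₁ := by rw [hq₁, hdi₁]
  have hq₂len : q₂.length = F s₂ := by rw [hq₂, SimpleGraph.dist_comm, hdi₂]
  -- the middle portion of c
  have hdist6 : Γ.dist (c.getVert i₁) (c.getVert i₂) ≤ 6 * ρ := by
    have t1 : Γ.dist (c.getVert i₁) (c.getVert i₂) ≤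
        Γ.dist (c.getVert i₁) (γ.getVert s₁) + Γ.dist (γ.getVert s₁) (c.getVert i₂) :=
      dist_triangle' ((hreachc i₁).symm.trans (hreachγ s₁))
        ((hreachγ s₁).symm.trans (hreachc i₂))
    have t2 : Γ.dist (γ.getVert s₁) (c.getVert i₂) ≤
        Γ.dist (γ.getVert s₁) (γ.getVert s₂) + Γ.dist (γ.getVert s₂) (c.getVert i₂) :=
      dist_triangle' ((hreachγ s₁).symm.trans (hreachγ s₂))
        ((hreachγ s₂).symm.trans (hreachc i₂))
    have t3 : Γ.dist (γ.getVert s₁) (γ.getVert s₂) ≤ (s₀ - s₁) + (s₂ - s₀) := by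
      have h6 := dist_triangle' ((hreachγ s₁).symm.trans (hreachγ s₀))
        ((hreachγ s₀).symm.trans (hreachγ s₂))
      rw [hd₁, hd₂] at h6
      exact h6
    have e1 : Γ.dist (c.getVert i₁) (γ.getVert s₁) = F s₁ := by
      rw [SimpleGraph.dist_comm]; exact hdi₁
    have e2 : Γ.dist (γ.getVert s₂) (c.getVert i₂) = F s₂ := hdi₂
    omega
  obtain ⟨qm, hqmsup, hqml⟩ : ∃ qm : Γ.Walk (c.getVert i₁) (c.getVert i₂),
      (∀ z ∈ qm.support, ∃ i ≤ c.length, c.getVert i = z) ∧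
      ((qm.length : ℝ) ≤ k * (6 * ρ) + l) := by
    have key : ∀ (a b : ℕ), a ≤ b → b ≤ c.length →
        Γ.dist (c.getVert a) (c.getVert b) ≤ 6 * ρ →
        ((b - a : ℕ) : ℝ) ≤ k * (6 * ρ) + l := by
      intro a b hab hb hd6
      have hqg := hc a b hab hb
      rw [gdist] at hqg
      have hcast : ((b - a : ℕ) : ℝ) = (b : ℝ) - (a : ℝ) := by
        push_cast [hab]; ring
      rw [hcast]
      have h7 : (Γ.dist (c.getVert a) (c.getVert b) : ℝ) ≤ 6 * (ρ : ℝ) := by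
        exact_mod_cast hd6
      nlinarith
    rcases le_total i₁ i₂ with hii | hii
    · refine ⟨wseg c i₁ i₂ hii, ?_, ?_⟩
      · intro z hz
        obtain ⟨n, rfl, hn⟩ := Walk.mem_support_iff_exists_getVert.mp
          (support_wseg_subset c hii hz)
        exact ⟨n, hn, rfl⟩
      · have hlen : (wseg c i₁ i₂ hii).length = i₂ - i₁ := by
          rw [length_wseg]; omega
        rw [hlen]
        exact key i₁ i₂ hii hi₂ hdist6
    · refine ⟨(wseg c i₂ i₁ hii).reverse, ?_, ?_⟩
      · intro z hz
        rw [Walk.support_reverse, List.mem_reverse] at hz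
        obtain ⟨n, rfl, hn⟩ := Walk.mem_support_iff_exists_getVert.mp
          (support_wseg_subset c hii hz)
        exact ⟨n, hn, rfl⟩
      · have hlen : (wseg c i₂ i₁ hii).reverse.length = i₁ - i₂ := by
          rw [Walk.length_reverse, length_wseg]; omega
        rw [hlen]
        exact key i₂ i₁ hii hi₁ (by rwa [SimpleGraph.dist_comm] at hdist6)
  set q : Γ.Walk (γ.getVert s₁) (γ.getVert s₂) := q₁.append (qm.append q₂) with hqdef
  have hqlen : (q.length : ℝ) ≤ (6 * k + 2) * ρ + l := by
    have h8 : q.length = q₁.length + (qm.length + q₂.length) := by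
      rw [hqdef, Walk.length_append, Walk.length_append]
    rw [h8]
    push_cast
    have b1 : (q₁.length : ℝ) ≤ ρ := by rw [hq₁len]; exact_mod_cast hgs₁
    have b2 : (q₂.length : ℝ) ≤ ρ := by rw [hq₂len]; exact_mod_cast hgs₂
    linarith
  -- the middle geodesic
  have hs₁₂ : s₁ ≤ s₂ := le_trans hs₁₀ hs₀₂
  have hσ'g : IsGeodesic Γ (wseg γ s₁ s₂ hs₁₂) := hγ.wseg hs₁₂ hs₂len
  have hwmem : γ.getVert s₀ ∈ (wseg γ s₁ s₂ hs₁₂).support := by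
    apply Walk.mem_support_iff_exists_getVert.mpr
    refine ⟨s₀ - s₁, ?_, ?_⟩
    · rw [getVert_wseg γ hs₁₂ (by omega)]
      congr 1
      omega
    · rw [length_wseg]
      omega
  -- distances from γ s₀ to the ends
  have hρs₀ : ρ ≤ s₀ := by
    have h0 := hwlow 0 (Nat.zero_le _)
    rw [Walk.getVert_zero] at h0
    have hdu : Γ.dist u (γ.getVert s₀) = s₀ := by
      have h9 := hγ.dist_getVert (Nat.zero_le s₀) hs₀len
      rwa [Walk.getVert_zero, Nat.sub_zero] at h9
    rw [SimpleGraph.dist_comm, hdu] at h0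
    exact h0
  have hρlen : ρ ≤ γ.length - s₀ := by
    have h0 := hwlow c.length le_rfl
    rw [Walk.getVert_length] at h0
    have hdu : Γ.dist (γ.getVert s₀) x = γ.length - s₀ := by
      have h9 := hγ.dist_getVert hs₀len le_rfl
      rwa [Walk.getVert_length] at h9
    rw [hdu] at h0
    exact h0
  -- every point of q is ρ-far from γ s₀
  have hfar : ∀ z ∈ q.support, ρ ≤ Γ.dist (γ.getVert s₀) z := by
    intro z hz
    have hz3 : z ∈ q₁.support ∨ z ∈ qm.support ∨ z ∈ q₂.support := by
      rcases mem_support_append hz with h | h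
      · exact Or.inl h
      · rcases mem_support_append h with h | h
        · exact Or.inr (Or.inl h)
        · exact Or.inr (Or.inr h)
    rcases hz3 with h | h | h
    · -- on the first connector
      have hzd : Γ.dist (γ.getVert s₁) z ≤ F s₁ := by
        have h10 := dist_le_of_mem_support h
        omega
      have hrz : Γ.Reachable (γ.getVert s₁) z := reachable_of_mem_support h
      have htri2 : Γ.dist (γ.getVert s₁) (γ.getVert s₀) ≤
          Γ.dist (γ.getVert s₁) z + Γ.dist z (γ.getVert s₀) :=
        dist_triangle' hrz (hrz.symm.trans ((hreachγ s₁).symm.trans (hreachγ s₀)))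
      have hcm : Γ.dist z (γ.getVert s₀) = Γ.dist (γ.getVert s₀) z := SimpleGraph.dist_comm ..
      rcases Nat.lt_or_ge s₀ (2 * ρ) with hcase | hcase
      · -- clamped at the left end: z must be u itself
        have hs₁0 : s₁ = 0 := by omega
        have hF0 : F s₁ = 0 := by
          have h5 := hFle s₁ 0 (Nat.zero_le _)
          have hgu : γ.getVert s₁ = u := by rw [hs₁0, Walk.getVert_zero]
          rw [hgu, Walk.getVert_zero, SimpleGraph.dist_self] at h5
          omega
        have hzu : z = γ.getVert s₁ := by
          have hz0 : Γ.dist (γ.getVert s₁) z = 0 := by omega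
          exact (hrz.dist_eq_zero_iff.mp hz0).symm
        rw [hzu, SimpleGraph.dist_comm, hd₁]
        omega
      · omega
    · -- on the middle portion
      obtain ⟨i, hi, rfl⟩ := hqmsup z h
      exact hwlow i hi
    · -- on the second connector
      have hzd : Γ.dist z (γ.getVert s₂) ≤ F s₂ := by
        have hmem : z ∈ q₂.reverse.support := by
          rw [Walk.support_reverse, List.mem_reverse]; exact h
        have h10 := dist_le_of_mem_support hmem
        rw [Walk.length_reverse] at h10
        rw [SimpleGraph.dist_comm]
        omega
      have hrz : Γ.Reachable z (γ.getVert s₂) :=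
        (reachable_of_mem_support h).symm.trans ((hreachc i₂).symm.trans (hreachγ s₂))
      have htri2 : Γ.dist (γ.getVert s₀) (γ.getVert s₂) ≤
          Γ.dist (γ.getVert s₀) z + Γ.dist z (γ.getVert s₂) :=
        dist_triangle' (((hreachγ s₀).symm.trans (hreachγ s₂)).trans hrz.symm) hrz
      rcases Nat.lt_or_ge γ.length (s₀ + 2 * ρ) with hcase | hcase
      · -- clamped at the right end: z must be x itself
        have hs₂eq : s₂ = γ.length := by omega
        have hgx : γ.getVert s₂ = x := γ.getVert_of_length_le (le_of_eq hs₂eq.symm)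
        have hF0 : F s₂ = 0 := by
          have h5 := hFle s₂ c.length le_rfl
          rw [hgx, Walk.getVert_length, SimpleGraph.dist_self] at h5
          omega
        have hzx : z = γ.getVert s₂ := by
          have hz0 : Γ.dist z (γ.getVert s₂) = 0 := by omega
          exact hrz.dist_eq_zero_iff.mp hz0
        rw [hzx, hd₂]
        omega
      · omega
  -- apply the thin-bigon estimate
  set L := q.length with hLdef
  have hqpow : q.length ≤ 2 ^ (Nat.log 2 L + 1) :=
    le_of_lt (Nat.lt_pow_succ_log_self (by norm_num) L)
  obtain ⟨z, hz, hdz⟩ := gromov hδ0 hslim (Nat.log 2 L + 1) (γ.getVert s₁) (γ.getVert s₂)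
    q (wseg γ s₁ s₂ hs₁₂) hσ'g hqpow (γ.getVert s₀) hwmem
  have hlow : (ρ : ℝ) ≤ (Γ.dist (γ.getVert s₀) z : ℝ) := by exact_mod_cast hfar z hz
  set xx : ℝ := (6 * k + 2) * (ρ : ℝ) + l + 1 with hxx
  have hx1 : (1 : ℝ) ≤ xx := by
    have h11 : (0 : ℝ) ≤ (6 * k + 2) * (ρ : ℝ) := by positivity
    rw [hxx]; linarith
  have hLx : (L : ℝ) ≤ xx := by rw [hxx]; linarith [hqlen]
  have hnl : (Nat.log 2 L : ℝ) ≤ 3 * Real.sqrt xx := natlog_le_sqrt hLx hx1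
  have hρb : (ρ : ℝ) ≤ 3 * Real.sqrt xx * δ + δ + 1 := by
    have h12 := le_trans hlow hdz
    push_cast at h12
    have h13 := mul_le_mul_of_nonneg_right hnl hδ0
    linarith
  have hsq : Real.sqrt xx ≤ Real.sqrt (6 * k + l + 3) * Real.sqrt ((ρ : ℝ) + 1) := by
    rw [← Real.sqrt_mul (by positivity)]
    apply Real.sqrt_le_sqrt
    rw [hxx]
    nlinarith [Nat.cast_nonneg (α := ℝ) ρ, hk.le, hl.le]
  have hs1 : (1 : ℝ) ≤ Real.sqrt ((ρ : ℝ) + 1) := by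
    have h := Real.sqrt_le_sqrt (show (1 : ℝ) ≤ (ρ : ℝ) + 1 by
      have := Nat.cast_nonneg (α := ℝ) ρ; linarith)
    rwa [Real.sqrt_one] at h
  have hss : Real.sqrt ((ρ : ℝ) + 1) ^ 2 = (ρ : ℝ) + 1 := Real.sq_sqrt (by positivity)
  have hQ : (0 : ℝ) ≤ Real.sqrt (6 * k + l + 3) := Real.sqrt_nonneg _
  have hBs : (ρ : ℝ) + 1 ≤ (3 * δ * Real.sqrt (6 * k + l + 3) + δ + 2) *
      Real.sqrt ((ρ : ℝ) + 1) := by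
    have h14 := mul_le_mul_of_nonneg_left hsq (by positivity : (0 : ℝ) ≤ 3 * δ)
    have e1 : (0 : ℝ) ≤ δ * (Real.sqrt ((ρ : ℝ) + 1) - 1) :=
      mul_nonneg hδ0 (by linarith)
    nlinarith [Real.sqrt_nonneg xx]
  have hsB : Real.sqrt ((ρ : ℝ) + 1) ≤ 3 * δ * Real.sqrt (6 * k + l + 3) + δ + 2 := by
    nlinarith
  rw [rho0]
  nlinarith

/-- Scale at which we leave the apex. -/
def M0 (δ k l : ℝ) : ℕ := ⌈2 * rho0 δ k l⌉₊ + 2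

/-- The angle bound between a quasi-geodesic and a geodesic with the same endpoints. -/
def N0 (δ k l : ℝ) : ℕ :=
  ⌈k * ((M0 δ k l : ℝ) + rho0 δ k l) + l + rho0 δ k l + 2 * (M0 δ k l : ℝ)⌉₊

lemma main_angle {δ k l : ℝ} (hδ0 : 0 ≤ δ) (hslim : SlimTriangles Γ δ) (hk : 0 < k)
    (hl : 0 < l) {a x : V'} (hax : x ≠ a) (c : Γ.Walk a x) (hc : IsQuasiGeodesic Γ c k l)
    (hca : a ∉ c.support.tail) (γ : Γ.Walk a x) (hγ : IsGeodesic Γ γ) :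
    angle Γ a (c.getVert 1) (γ.getVert 1) ≤ (N0 δ k l : ℕ∞) := by
  have hcnil : ¬ c.Nil := not_nil_of_ne (Ne.symm hax)
  have hγnil : ¬ γ.Nil := not_nil_of_ne (Ne.symm hax)
  have hR0 : (0 : ℝ) ≤ rho0 δ k l := rho0_nonneg δ k l
  have hMR : 2 * rho0 δ k l + 2 ≤ ((M0 δ k l : ℕ) : ℝ) := by
    unfold M0
    push_cast
    linarith [Nat.le_ceil (2 * rho0 δ k l)]
  have hM1 : 1 ≤ M0 δ k l := by unfold M0; omega
  have hM0' : (0 : ℝ) ≤ (M0 δ k l : ℝ) := Nat.cast_nonneg _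
  have hγdist : γ.length = Γ.dist a x := hγ.length_eq_dist
  have hclen : (c.length : ℝ) ≤ k * (γ.length : ℝ) + l := by
    have h1 := hc 0 c.length (Nat.zero_le _) le_rfl
    rw [gdist, Walk.getVert_zero, Walk.getVert_length] at h1
    rw [hγdist]
    push_cast at h1 ⊢
    linarith
  have hN : k * ((M0 δ k l : ℝ) + rho0 δ k l) + l + rho0 δ k l + 2 * (M0 δ k l : ℝ) ≤
      ((N0 δ k l : ℕ) : ℝ) := by
    unfold N0
    exact Nat.le_ceil _
  by_cases hbig : M0 δ k l ≤ γ.length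
  · -- the apex is far from the other endpoint
    obtain ⟨i, hi, hdist⟩ := morse hδ0 hslim hk hl c hc γ hγ (M0 δ k l) hbig
    have hreach_w : Γ.Reachable a (γ.getVert (M0 δ k l)) := (wtake γ (M0 δ k l)).reachable
    have hreach_ci : Γ.Reachable a (c.getVert i) := (wtake c i).reachable
    have hdaw : Γ.dist a (γ.getVert (M0 δ k l)) = M0 δ k l := by
      have h1 := hγ.dist_getVert (Nat.zero_le (M0 δ k l)) hbig
      rwa [Walk.getVert_zero, Nat.sub_zero] at h1
    have hlowi : ((M0 δ k l : ℕ) : ℝ) - rho0 δ k l ≤ (Γ.dist a (c.getVert i) : ℝ) := by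
      have htr : Γ.dist a (γ.getVert (M0 δ k l)) ≤
          Γ.dist a (c.getVert i) + Γ.dist (c.getVert i) (γ.getVert (M0 δ k l)) :=
        dist_triangle' hreach_ci (hreach_ci.symm.trans hreach_w)
      rw [hdaw] at htr
      have hcm : (Γ.dist (c.getVert i) (γ.getVert (M0 δ k l)) : ℝ) ≤ rho0 δ k l := by
        rw [SimpleGraph.dist_comm]; exact hdist
      have h2 := (Nat.cast_le (α := ℝ)).mpr htr
      push_cast at h2
      linarith
    have hhighi : (Γ.dist a (c.getVert i) : ℝ) ≤ (M0 δ k l : ℝ) + rho0 δ k l := by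
      have htr : Γ.dist a (c.getVert i) ≤
          Γ.dist a (γ.getVert (M0 δ k l)) + Γ.dist (γ.getVert (M0 δ k l)) (c.getVert i) :=
        dist_triangle' hreach_w (hreach_w.symm.trans hreach_ci)
      rw [hdaw] at htr
      have h2 := (Nat.cast_le (α := ℝ)).mpr htr
      push_cast at h2
      linarith
    have hi1 : 1 ≤ i := by
      rcases Nat.eq_zero_or_pos i with rfl | h
      · rw [Walk.getVert_zero, SimpleGraph.dist_self, Nat.cast_zero] at hlowi
        linarith
      · exact h
    have hibound : (i : ℝ) ≤ k * ((M0 δ k l : ℝ) + rho0 δ k l) + l := by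
      have h1 := hc 0 i (Nat.zero_le _) hi
      rw [gdist, Walk.getVert_zero] at h1
      push_cast at h1
      nlinarith
    obtain ⟨hop, hhop⟩ := (hreach_ci.symm.trans hreach_w).exists_walk_length_eq_dist
    have hhoplen : (hop.length : ℝ) ≤ rho0 δ k l := by
      rw [hhop, SimpleGraph.dist_comm]
      exact hdist
    have hhopsup : a ∉ hop.support := by
      intro hmem
      have h1 : Γ.dist (c.getVert i) a ≤ hop.length := dist_le_of_mem_support hmem
      have h2 : (Γ.dist (c.getVert i) a : ℝ) ≤ rho0 δ k l :=
        le_trans (by exact_mod_cast h1) hhoplen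
      rw [SimpleGraph.dist_comm] at h2
      linarith
    have hPsup : a ∉ ((wseg c 1 i hi1).append
        (hop.append (wseg γ 1 (M0 δ k l) hM1).reverse)).support := by
      intro hmem
      rcases mem_support_append hmem with h | h
      · exact hca (support_wseg_subset_tail c hi1 le_rfl hcnil h)
      rcases mem_support_append h with h | h
      · exact hhopsup h
      · rw [Walk.support_reverse, List.mem_reverse] at h
        exact hγ.not_mem_support_tail hγnil
          (support_wseg_subset_tail γ hM1 le_rfl hγnil h)
    have hPlen : (((wseg c 1 i hi1).append
        (hop.append (wseg γ 1 (M0 δ k l) hM1).reverse)).length : ℝ) ≤ (N0 δ k l : ℝ) := by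
      rw [Walk.length_append, Walk.length_append, Walk.length_reverse]
      have l1 : ((wseg c 1 i hi1).length : ℝ) ≤ (i : ℝ) := by
        rw [length_wseg]
        have h3 : min (i - 1) (c.length - 1) ≤ i := by omega
        exact_mod_cast h3
      have l3 : ((wseg γ 1 (M0 δ k l) hM1).length : ℝ) ≤ (M0 δ k l : ℝ) := by
        rw [length_wseg]
        have h3 : min (M0 δ k l - 1) (γ.length - 1) ≤ M0 δ k l := by omega
        exact_mod_cast h3
      push_cast
      linarith
    calc angle Γ a (c.getVert 1) (γ.getVert 1) ≤ _ := angle_le_length a _ hPsup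
      _ ≤ (N0 δ k l : ℕ∞) := by
          have h4 : ((wseg c 1 i hi1).append
              (hop.append (wseg γ 1 (M0 δ k l) hM1).reverse)).length ≤ N0 δ k l := by
            exact_mod_cast hPlen
          exact_mod_cast h4
  · -- everything is close to the apex
    push_neg at hbig
    have hPsup : a ∉ ((c.drop 1).append (γ.drop 1).reverse).support := by
      intro hmem
      rcases mem_support_append hmem with h | h
      · exact hca (support_drop_subset_tail c 0 hcnil h)
      · rw [Walk.support_reverse, List.mem_reverse] at h
        exact hγ.not_mem_support_tail hγnil (support_drop_subset_tail γ 0 hγnil h)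
    have hPlen : (((c.drop 1).append (γ.drop 1).reverse).length : ℝ) ≤ (N0 δ k l : ℝ) := by
      rw [Walk.length_append, Walk.length_reverse, length_drop, length_drop]
      have e1 : ((c.length - 1 : ℕ) : ℝ) ≤ (c.length : ℝ) := by
        exact_mod_cast Nat.sub_le _ _
      have e2 : ((γ.length - 1 : ℕ) : ℝ) ≤ (γ.length : ℝ) := by
        exact_mod_cast Nat.sub_le _ _
      have e3 : (γ.length : ℝ) ≤ (M0 δ k l : ℝ) := by exact_mod_cast hbig.le
      have e4 : k * (γ.length : ℝ) ≤ k * (M0 δ k l : ℝ) :=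
        mul_le_mul_of_nonneg_left e3 hk.le
      have e5 : (0 : ℝ) ≤ k * rho0 δ k l := mul_nonneg hk.le hR0
      push_cast
      linarith
    calc angle Γ a (c.getVert 1) (γ.getVert 1) ≤ _ := angle_le_length a _ hPsup
      _ ≤ (N0 δ k l : ℕ∞) := by
          have h4 : ((c.drop 1).append (γ.drop 1).reverse).length ≤ N0 δ k l := by
            exact_mod_cast hPlen
          exact_mod_cast h4

end Aux

/-- Comparison of angles at an apex between quasi-geodesics and geodesics with the same
endpoints, in a `δ`-hyperbolic coned-off Cayley graph: the angles differ by at most a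
constant `λ = λ(δ,k,l)`, and one is infinite iff the other is. -/
theorem angle_vs_quasigeodesics (δ k l : ℝ) (hδ : 0 < δ) (hk : 0 < k) (hl : 0 < l) :
    ∃ lam : ℝ, 0 ≤ lam ∧
      ∀ (G : Type u) [Group G] (ι : Type u) (P : ι → Subgroup G) (X : Set G),
        SlimTriangles (conedCayley G P X) δ →
        ∀ (c₀ : Coset P) (x y : ConedV G P),
          x ≠ Sum.inr c₀ → y ≠ Sum.inr c₀ →
          ∀ (c₁ : (conedCayley G P X).Walk (Sum.inr c₀) x)
            (c₂ : (conedCayley G P X).Walk (Sum.inr c₀) y),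
            IsQuasiGeodesic (conedCayley G P X) c₁ k l →
            IsQuasiGeodesic (conedCayley G P X) c₂ k l →
            Sum.inr c₀ ∉ c₁.support.tail → Sum.inr c₀ ∉ c₂.support.tail →
            ∀ (γ₁ : (conedCayley G P X).Walk (Sum.inr c₀) x)
              (γ₂ : (conedCayley G P X).Walk (Sum.inr c₀) y),
              IsGeodesic (conedCayley G P X) γ₁ → IsGeodesic (conedCayley G P X) γ₂ →
              ((pathAngle (conedCayley G P X) c₁ c₂ = ⊤ ↔
                  pathAngle (conedCayley G P X) γ₁ γ₂ = ⊤) ∧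
               ∀ a b : ℕ, pathAngle (conedCayley G P X) c₁ c₂ = (a : ℕ∞) →
                 pathAngle (conedCayley G P X) γ₁ γ₂ = (b : ℕ∞) →
                 (a : ℝ) - lam ≤ (b : ℝ) ∧ (b : ℝ) ≤ (a : ℝ) + lam) := by
  classical
  refine ⟨2 * (N0 δ k l : ℝ), by positivity, ?_⟩
  intro G _ ι P X hslim c₀ x y hx hy c₁ c₂ hqc₁ hqc₂ hc₁t hc₂t γ₁ γ₂ hγ₁ hγ₂
  have h1 : angle (conedCayley G P X) (Sum.inr c₀) (c₁.getVert 1) (γ₁.getVert 1) ≤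
      (N0 δ k l : ℕ∞) := main_angle hδ.le hslim hk hl hx c₁ hqc₁ hc₁t γ₁ hγ₁
  have h2 : angle (conedCayley G P X) (Sum.inr c₀) (c₂.getVert 1) (γ₂.getVert 1) ≤
      (N0 δ k l : ℕ∞) := main_angle hδ.le hslim hk hl hy c₂ hqc₂ hc₂t γ₂ hγ₂
  have hBA : pathAngle (conedCayley G P X) γ₁ γ₂ ≤
      (N0 δ k l : ℕ∞) + pathAngle (conedCayley G P X) c₁ c₂ + (N0 δ k l : ℕ∞) := by
    have t1 := angle_triangle (Γ := conedCayley G P X) (Sum.inr c₀)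
      (γ₁.getVert 1) (c₁.getVert 1) (γ₂.getVert 1)
    have t2 := angle_triangle (Γ := conedCayley G P X) (Sum.inr c₀)
      (c₁.getVert 1) (c₂.getVert 1) (γ₂.getVert 1)
    have t3 : angle (conedCayley G P X) (Sum.inr c₀) (γ₁.getVert 1) (c₁.getVert 1) ≤
        (N0 δ k l : ℕ∞) := by rw [angle_comm]; exact h1
    show angle (conedCayley G P X) (Sum.inr c₀) (γ₁.getVert 1) (γ₂.getVert 1) ≤ _
    calc angle (conedCayley G P X) (Sum.inr c₀) (γ₁.getVert 1) (γ₂.getVert 1) ≤ _ := t1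
      _ ≤ (N0 δ k l : ℕ∞) +
          (angle (conedCayley G P X) (Sum.inr c₀) (c₁.getVert 1) (c₂.getVert 1) +
            (N0 δ k l : ℕ∞)) :=
        add_le_add t3 (t2.trans (add_le_add_right h2 _))
      _ = _ := by rw [add_assoc]; rfl
  have hAB : pathAngle (conedCayley G P X) c₁ c₂ ≤
      (N0 δ k l : ℕ∞) + pathAngle (conedCayley G P X) γ₁ γ₂ + (N0 δ k l : ℕ∞) := by
    have t1 := angle_triangle (Γ := conedCayley G P X) (Sum.inr c₀)
      (c₁.getVert 1) (γ₁.getVert 1) (c₂.getVert 1)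
    have t2 := angle_triangle (Γ := conedCayley G P X) (Sum.inr c₀)
      (γ₁.getVert 1) (γ₂.getVert 1) (c₂.getVert 1)
    have t4 : angle (conedCayley G P X) (Sum.inr c₀) (γ₂.getVert 1) (c₂.getVert 1) ≤
        (N0 δ k l : ℕ∞) := by rw [angle_comm]; exact h2
    show angle (conedCayley G P X) (Sum.inr c₀) (c₁.getVert 1) (c₂.getVert 1) ≤ _
    calc angle (conedCayley G P X) (Sum.inr c₀) (c₁.getVert 1) (c₂.getVert 1) ≤ _ := t1
      _ ≤ (N0 δ k l : ℕ∞) +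
          (angle (conedCayley G P X) (Sum.inr c₀) (γ₁.getVert 1) (γ₂.getVert 1) +
            (N0 δ k l : ℕ∞)) :=
        add_le_add h1 (t2.trans (add_le_add_right t4 _))
      _ = _ := by rw [add_assoc]; rfl
  constructor
  · constructor
    · intro htop
      by_contra hBne
      rw [htop] at hAB
      have hne : ((N0 δ k l : ℕ∞) + pathAngle (conedCayley G P X) γ₁ γ₂ +
          (N0 δ k l : ℕ∞)) ≠ ⊤ :=
        WithTop.add_ne_top.mpr
          ⟨WithTop.add_ne_top.mpr ⟨ENat.coe_ne_top _, hBne⟩, ENat.coe_ne_top _⟩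
      exact hne (top_le_iff.mp hAB)
    · intro htop
      by_contra hAne
      rw [htop] at hBA
      have hne : ((N0 δ k l : ℕ∞) + pathAngle (conedCayley G P X) c₁ c₂ +
          (N0 δ k l : ℕ∞)) ≠ ⊤ :=
        WithTop.add_ne_top.mpr
          ⟨WithTop.add_ne_top.mpr ⟨ENat.coe_ne_top _, hAne⟩, ENat.coe_ne_top _⟩
      exact hne (top_le_iff.mp hBA)
  · intro m n hm hn
    rw [hm, hn] at hAB hBA
    have hAB' : m ≤ N0 δ k l + n + N0 δ k l := by exact_mod_cast hAB
    have hBA' : n ≤ N0 δ k l + m + N0 δ k l := by exact_mod_cast hBA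
    have hAB'' : (m : ℝ) ≤ N0 δ k l + n + N0 δ k l := by exact_mod_cast hAB'
    have hBA'' : (n : ℝ) ≤ N0 δ k l + m + N0 δ k l := by exact_mod_cast hBA'
    constructor <;> linarith

end GpQc
end
end

section
/- Let G be a group generated by X with 𝒫 = {P_1,…,P_n} ↪_h (G,X), 𝒳 = X ∪ ⋃_i X_i, 𝕂_r = 𝕂_r(G,X,⋃_i X_i,𝒫) the coned-off cusped Cayley graph, and 𝒜 = Γ̂(G,𝒫,𝒳) the coned-off Cayley graph. For any r ∈ ℕ and any integer q ∈ [1, r−1], the map ι_q^r : 𝒜 → 𝕂_r is an (r+1, 0)-quasi-isometry. -/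
set_option autoImplicit false
set_option maxHeartbeats 1000000

noncomputable section

namespace GpQc

universe u

open SimpleGraph

/-! ### Basic metric notions on graphs -/

variable {V W : Type*}

/-! ### Graphs with a group action -/

variable {G : Type u} [Group G]

variable {ι : Type u}

/-! ### Auxiliary lemmas for the quasi-isometry theorem -/

section QIAux

variable {V' W' : Type*}

/-- Map a walk through a function collapsing or preserving each edge. -/
lemma walk_map_of_step {Γ : SimpleGraph V'} {Δ : SimpleGraph W'} {f : V' → W'}
    (h : ∀ a b, Γ.Adj a b → Δ.Adj (f a) (f b) ∨ f a = f b) {x y : V'} (p : Γ.Walk x y) :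
    ∃ q : Δ.Walk (f x) (f y), q.length ≤ p.length := by
  induction p with
  | nil => exact ⟨SimpleGraph.Walk.nil, le_refl _⟩
  | cons h' p ih =>
    obtain ⟨q, hq⟩ := ih
    rcases h _ _ h' with hadj | heq
    · exact ⟨SimpleGraph.Walk.cons hadj q, by simpa using Nat.succ_le_succ hq⟩
    · exact ⟨q.copy heq.symm rfl, by simp only [SimpleGraph.Walk.length_copy,
        SimpleGraph.Walk.length_cons]; omega⟩

/-- Map a walk through a function expanding each edge into a walk of bounded length. -/
lemma walk_map_of_bound {Γ : SimpleGraph V'} {Δ : SimpleGraph W'} {f : V' → W'} {C : ℕ}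
    (h : ∀ a b, Γ.Adj a b → ∃ q : Δ.Walk (f a) (f b), q.length ≤ C) {x y : V'}
    (p : Γ.Walk x y) :
    ∃ q : Δ.Walk (f x) (f y), q.length ≤ C * p.length := by
  induction p with
  | nil => exact ⟨SimpleGraph.Walk.nil, by simp⟩
  | cons h' p ih =>
    obtain ⟨q₂, hq₂⟩ := ih
    obtain ⟨q₁, hq₁⟩ := h _ _ h'
    refine ⟨q₁.append q₂, ?_⟩
    rw [SimpleGraph.Walk.length_append, SimpleGraph.Walk.length_cons]
    calc q₁.length + q₂.length ≤ C + C * p.length := Nat.add_le_add hq₁ hq₂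
    _ = C * (p.length + 1) := by ring

variable {G : Type u} [Group G] {ι : Type u}

/-- The depth-`m` vertex over `g` in the horoball of the coset of `g` in `P i`. -/
def node (P : ι → Subgroup G) (i : ι) (g : G) : ℕ → CuspV G P
  | 0 => Sum.inl g
  | (m+1) => Sum.inr (Sum.inl ⟨i, (g, m.succPNat)⟩)

variable (P : ι → Subgroup G) (X : Set G) (Xi : ι → Set G) (r : ℕ)

lemma node_adj_succ (i : ι) (g : G) (m : ℕ) :
    (cusped G P X Xi r).Adj (node P i g m) (node P i g (m+1)) := by
  rw [cusped, SimpleGraph.fromRel_adj]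
  constructor
  · intro hh
    have := congrArg (cuspDepth (P := P) r) hh
    cases m <;> simp [cuspDepth, node, Nat.succPNat_coe] at this
  · left
    cases m with
    | zero => exact ⟨rfl, rfl⟩
    | succ k =>
      refine ⟨rfl, Or.inl ⟨rfl, ?_⟩⟩
      simp [Nat.succPNat_coe]

/-- The vertical walk from a group element down to depth `k` in its horoball. -/
def vwalk (i : ι) (g : G) : (k : ℕ) → (cusped G P X Xi r).Walk (Sum.inl g) (node P i g k)
  | 0 => SimpleGraph.Walk.nil
  | (k+1) => (vwalk i g k).concat (node_adj_succ P X Xi r i g k)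

lemma vwalk_length (i : ι) (g : G) (k : ℕ) : (vwalk P X Xi r i g k).length = k := by
  induction k with
  | zero => rfl
  | succ k ih => rw [vwalk, SimpleGraph.Walk.length_concat, ih]

lemma node_adj_apex (i : ι) (g : G) (s : ℕ) (hrs : r ≤ s + 1) :
    (cusped G P X Xi r).Adj (node P i g (s+1))
      (Sum.inr (Sum.inr ⟨i, QuotientGroup.mk g⟩)) := by
  rw [cusped, SimpleGraph.fromRel_adj]
  refine ⟨by simp [node], Or.inl ⟨rfl, ?_, rfl⟩⟩
  simpa [Nat.succPNat_coe] using hrs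

lemma iota_step_rel (hr : 1 ≤ r) {a b : ConedV G P} (hne : a ≠ b)
    (h : conedRel P (X ∪ ⋃ i, Xi i) a b) :
    ∃ q : (cusped G P X Xi r).Walk (iotaMap P a) (iotaMap P b), q.length ≤ r + 1 := by
  match a, b with
  | Sum.inl g, Sum.inl g' =>
    obtain ⟨x, hx, rfl⟩ := h
    have hadj : (cusped G P X Xi r).Adj (Sum.inl g) (Sum.inl (g * x)) := by
      rw [cusped, SimpleGraph.fromRel_adj]
      refine ⟨by simpa using hne, Or.inl ?_⟩
      rcases hx with hx | hx
      · exact Or.inl ⟨x, hx, rfl⟩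
      · obtain ⟨i, hi⟩ := Set.mem_iUnion.mp hx
        exact Or.inr ⟨i, x, hi, rfl⟩
    exact ⟨SimpleGraph.Walk.cons hadj SimpleGraph.Walk.nil, by show 0 + 1 ≤ r + 1; omega⟩
  | Sum.inl g, Sum.inr c =>
    obtain ⟨i, cq⟩ := c
    have h' : cq = QuotientGroup.mk g := h
    subst h'
    obtain ⟨s, rfl⟩ : ∃ s, r = s + 1 := ⟨r - 1, by omega⟩
    refine ⟨(vwalk P X Xi (s+1) i g (s+1)).concat
      (node_adj_apex P X Xi (s+1) i g s le_rfl), ?_⟩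
    exact (SimpleGraph.Walk.length_concat (vwalk P X Xi (s+1) i g (s+1))
      (node_adj_apex P X Xi (s+1) i g s le_rfl)).trans_le (by rw [vwalk_length])
  | Sum.inr c, Sum.inl g => exact False.elim h
  | Sum.inr c, Sum.inr c' => exact False.elim h

lemma iota_step (hr : 1 ≤ r) {a b : ConedV G P}
    (h : (conedCayley G P (X ∪ ⋃ i, Xi i)).Adj a b) :
    ∃ q : (cusped G P X Xi r).Walk (iotaMap P a) (iotaMap P b), q.length ≤ r + 1 := by
  rw [conedCayley, SimpleGraph.fromRel_adj] at h
  obtain ⟨hne, h | h⟩ := h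
  · exact iota_step_rel P X Xi r hr hne h
  · obtain ⟨q, hq⟩ := iota_step_rel P X Xi r hr hne.symm h
    exact ⟨q.reverse, by simpa using hq⟩

/-- The coarse retraction from `𝕂_r` to the coned-off Cayley graph. -/
def rho (P : ι → Subgroup G) : CuspV G P → ConedV G P
  | Sum.inl g => Sum.inl g
  | Sum.inr (Sum.inl d) => Sum.inr ⟨d.1, QuotientGroup.mk d.2.1⟩
  | Sum.inr (Sum.inr c) => Sum.inr c

lemma rho_iota (a : ConedV G P) : rho P (iotaMap P a) = a := by
  cases a <;> rfl

lemma rho_step_rel {u v : CuspV G P} (h : cuspRel P X Xi r u v) :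
    conedRel P (X ∪ ⋃ i, Xi i) (rho P u) (rho P v) ∨ rho P u = rho P v := by
  match u, v with
  | Sum.inl g, Sum.inl g' =>
    rcases h with ⟨x, hx, rfl⟩ | ⟨i, x, hx, rfl⟩
    · exact Or.inl ⟨x, Or.inl hx, rfl⟩
    · exact Or.inl ⟨x, Or.inr (Set.mem_iUnion.mpr ⟨i, hx⟩), rfl⟩
  | Sum.inl g, Sum.inr (Sum.inl d) =>
    obtain ⟨h1, h2⟩ := h
    left
    show (⟨d.1, QuotientGroup.mk d.2.1⟩ : Coset P).2 = QuotientGroup.mk g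
    rw [h1]
  | Sum.inl g, Sum.inr (Sum.inr c) =>
    exact Or.inl h.2
  | Sum.inr (Sum.inl ⟨i, g, n⟩), Sum.inr (Sum.inl ⟨i', g', n'⟩) =>
    right
    obtain ⟨hi, h2⟩ := h
    cases hi
    rcases h2 with ⟨hg, _⟩ | ⟨_, _, hmem, _⟩
    · have hg' : g = g' := hg
      rw [hg']
      rfl
    · have hmem' : g⁻¹ * g' ∈ P i := hmem
      have hmk : (QuotientGroup.mk g : G ⧸ P i) = QuotientGroup.mk g' :=
        QuotientGroup.eq.mpr hmem'
      exact congrArg (fun x : G ⧸ P i => (Sum.inr ⟨i, x⟩ : ConedV G P)) hmk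
  | Sum.inr (Sum.inl ⟨i, g, n⟩), Sum.inr (Sum.inr c) =>
    right
    obtain ⟨ic, cq⟩ := c
    obtain ⟨h1, _, h3⟩ := h
    cases h1
    have h3' : cq = QuotientGroup.mk g := h3
    exact congrArg (fun x : G ⧸ P i => (Sum.inr ⟨i, x⟩ : ConedV G P)) h3'.symm
  | Sum.inr (Sum.inl _), Sum.inl _ => exact False.elim h
  | Sum.inr (Sum.inr _), Sum.inl _ => exact False.elim h
  | Sum.inr (Sum.inr _), Sum.inr _ => exact False.elim h

lemma rho_step {u v : CuspV G P} (h : (cusped G P X Xi r).Adj u v) :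
    (conedCayley G P (X ∪ ⋃ i, Xi i)).Adj (rho P u) (rho P v) ∨ rho P u = rho P v := by
  rw [cusped, SimpleGraph.fromRel_adj] at h
  obtain ⟨hne, h⟩ := h
  by_cases heq : rho P u = rho P v
  · exact Or.inr heq
  · left
    rw [conedCayley, SimpleGraph.fromRel_adj]
    refine ⟨heq, ?_⟩
    rcases h with h | h
    · rcases rho_step_rel P X Xi r h with h' | h'
      · exact Or.inl h'
      · exact absurd h' heq
    · rcases rho_step_rel P X Xi r h with h' | h'
      · exact Or.inr h'
      · exact absurd h'.symm heq

end QIAux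

/-- The map `ι_q^r : Γ̂(G,𝒫,𝒳) → 𝕂_r` is an `(r+1,0)`-quasi-isometry. -/
theorem iotaMap_quasiisometry
    {G : Type u} [Group G] {ι : Type u} [Finite ι] (P : ι → Subgroup G)
    (hPinf : ∀ i, ((P i : Set G)).Infinite)
    (X : Set G) (hXgen : Subgroup.closure X = ⊤) (hPhe : HypEmb P X)
    (Xi : ι → Set G) (hXi : ∀ i, (Xi i).Finite ∧ Xi i ⊆ (P i : Set G))
    (r q : ℕ) (hq : 0 < q) (hqr : q + 1 ≤ r) :
    IsQIEmb (conedCayley G P (X ∪ ⋃ i, Xi i)) (cusped G P X Xi r)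
      (iotaMap P) ((r : ℝ) + 1) 0 ∧
    ∀ y : CuspV G P, ∃ a : ConedV G P,
      gdist (cusped G P X Xi r) (iotaMap P a) y ≤ 2 * ((r : ℝ) + 1) := by
  have hr1 : 1 ≤ r := by omega
  set 𝒳 : Set G := X ∪ ⋃ i, Xi i with h𝒳
  -- the coned-off Cayley graph over 𝒳 contains the one over X, so it is connected
  have hle : conedCayley G P X ≤ conedCayley G P 𝒳 := by
    intro a b hab
    rw [conedCayley, SimpleGraph.fromRel_adj] at hab ⊢
    refine ⟨hab.1, ?_⟩
    have mono : ∀ u v : ConedV G P, conedRel P X u v → conedRel P 𝒳 u v := by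
      rintro (g | c) (g' | c') h
      · obtain ⟨x, hx, rfl⟩ := h
        exact ⟨x, Or.inl hx, rfl⟩
      · exact h
      · exact False.elim h
      · exact False.elim h
    rcases hab.2 with h | h
    · exact Or.inl (mono _ _ h)
    · exact Or.inr (mono _ _ h)
  have hAconn : (conedCayley G P 𝒳).Connected := by
    rw [SimpleGraph.connected_iff]
    exact ⟨fun a b => (hPhe.1.preconnected a b).mono hle, hPhe.1.nonempty⟩
  -- upper bound on distances in 𝕂_r
  have hupper : ∀ a b : ConedV G P,
      (cusped G P X Xi r).dist (iotaMap P a) (iotaMap P b)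
        ≤ (r + 1) * (conedCayley G P 𝒳).dist a b := by
    intro a b
    obtain ⟨p, hp⟩ := hAconn.exists_walk_length_eq_dist a b
    obtain ⟨q, hq⟩ := walk_map_of_bound
      (fun a b hab => iota_step P X Xi r hr1 hab) p
    calc (cusped G P X Xi r).dist (iotaMap P a) (iotaMap P b) ≤ q.length :=
          SimpleGraph.dist_le q
    _ ≤ (r + 1) * p.length := hq
    _ = (r + 1) * (conedCayley G P 𝒳).dist a b := by rw [hp]
  -- lower bound on distances in 𝕂_r
  have hlower : ∀ a b : ConedV G P,
      (conedCayley G P 𝒳).dist a b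
        ≤ (cusped G P X Xi r).dist (iotaMap P a) (iotaMap P b) := by
    intro a b
    have hreach : (cusped G P X Xi r).Reachable (iotaMap P a) (iotaMap P b) := by
      obtain ⟨p⟩ := hAconn.preconnected a b
      obtain ⟨q, _⟩ := walk_map_of_bound
        (fun a b hab => iota_step P X Xi r hr1 hab) p
      exact ⟨q⟩
    obtain ⟨w, hw⟩ := hreach.exists_walk_length_eq_dist
    obtain ⟨w', hw'⟩ := walk_map_of_step (fun u v huv => rho_step P X Xi r huv) w
    have := SimpleGraph.dist_le (w'.copy (rho_iota P a) (rho_iota P b))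
    rw [SimpleGraph.Walk.length_copy] at this
    rw [h𝒳]
    omega
  have hrpos : (0 : ℝ) < (r : ℝ) + 1 := by positivity
  refine ⟨fun a b => ?_, fun y => ?_⟩
  · constructor
    · -- 1/(r+1) * dA - 0 ≤ dK
      have h1 : gdist (conedCayley G P 𝒳) a b
          ≤ gdist (cusped G P X Xi r) (iotaMap P a) (iotaMap P b) := by
        unfold gdist; exact_mod_cast hlower a b
      have h0 : (0:ℝ) ≤ gdist (conedCayley G P 𝒳) a b := by unfold gdist; positivity
      have hle1 : 1 / ((r:ℝ) + 1) ≤ 1 := by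
        rw [div_le_one hrpos]; linarith
      nlinarith
    · -- dK ≤ (r+1) * dA + 0
      have h1 : gdist (cusped G P X Xi r) (iotaMap P a) (iotaMap P b)
          ≤ ((r:ℝ) + 1) * gdist (conedCayley G P 𝒳) a b := by
        unfold gdist
        have := hupper a b
        push_cast
        exact_mod_cast this
      linarith
  · -- density
    match y with
    | Sum.inl g =>
      refine ⟨Sum.inl g, ?_⟩
      unfold gdist
      rw [show iotaMap P (Sum.inl g) = Sum.inl g from rfl, SimpleGraph.dist_self]
      push_cast
      positivity
    | Sum.inr (Sum.inr c) =>
      refine ⟨Sum.inr c, ?_⟩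
      unfold gdist
      rw [show iotaMap P (Sum.inr c) = Sum.inr (Sum.inr c) from rfl, SimpleGraph.dist_self]
      push_cast
      positivity
    | Sum.inr (Sum.inl ⟨i, g, n⟩) =>
      by_cases hcase : r ≤ (n : ℕ)
      · -- deep vertex: adjacent to the apex
        refine ⟨Sum.inr ⟨i, QuotientGroup.mk g⟩, ?_⟩
        have hadj : (cusped G P X Xi r).Adj (Sum.inr (Sum.inl ⟨i, g, n⟩))
            (Sum.inr (Sum.inr ⟨i, QuotientGroup.mk g⟩)) := by
          rw [cusped, SimpleGraph.fromRel_adj]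
          exact ⟨by simp, Or.inl ⟨rfl, hcase, rfl⟩⟩
        have hd := SimpleGraph.dist_le (SimpleGraph.Walk.cons hadj.symm SimpleGraph.Walk.nil)
        unfold gdist
        rw [show iotaMap P (Sum.inr ⟨i, QuotientGroup.mk g⟩)
          = Sum.inr (Sum.inr ⟨i, QuotientGroup.mk g⟩) from rfl]
        have h1 : ((cusped G P X Xi r).dist (Sum.inr (Sum.inr ⟨i, QuotientGroup.mk g⟩))
            (Sum.inr (Sum.inl ⟨i, g, n⟩)) : ℝ) ≤ 1 := by
          exact_mod_cast hd
        linarith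
      · -- shallow vertex: walk down to the group element
        refine ⟨Sum.inl g, ?_⟩
        have hy : node P i g (n.natPred + 1) = Sum.inr (Sum.inl ⟨i, g, n⟩) := by
          simp [node, PNat.succPNat_natPred]
        have hd := SimpleGraph.dist_le
          ((vwalk P X Xi r i g (n.natPred + 1)).copy rfl hy)
        rw [SimpleGraph.Walk.length_copy, vwalk_length] at hd
        unfold gdist
        rw [show iotaMap P (Sum.inl g) = Sum.inl g from rfl]
        have hnn : n.natPred + 1 = (n : ℕ) := n.natPred_add_one
        have h1 : ((cusped G P X Xi r).dist (Sum.inl g)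
            (Sum.inr (Sum.inl ⟨i, g, n⟩)) : ℝ) ≤ (r : ℝ) := by
          have h2 : (cusped G P X Xi r).dist (Sum.inl g)
              (Sum.inr (Sum.inl ⟨i, g, n⟩)) ≤ r := by omega
          exact_mod_cast h2
        linarith

end GpQc
end
end
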